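/- arXiv:2307.14150 — 5 statements merged into one kernel-verified Lean document; each statement's English description precedes it below -/
import Mathlib

section
/- Let G be a finite, nonempty, connected simple graph and let k ≥ 1 be an integer. Then the vertex set of G can be covered by at most ⌈|V(G)|/k⌉ connected subgraphs, each having at most 2k vertices. -/
open SimpleGraph

section Aux

variable {V : Type*}

private lemma chain_induce_connected' [DecidableEq V] (G : SimpleGraph V) :
    ∀ l : List V, l ≠ [] → l.Chain' G.Adj →
      (G.induce (↑l.toFinset : Set V)).Connected := by
  intro l
  induction l with
  | nil => intro h; exact absurd rfl h
  | cons a t ih =>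
    intro _ hc
    cases t with
    | nil =>
      rw [connected_induce_iff]
      have : ((⊤ : G.Subgraph).induce ↑([a].toFinset : Finset V)) = G.singletonSubgraph a := by
        ext x y
        · simp
        · simp only [SimpleGraph.Subgraph.induce_adj, SimpleGraph.singletonSubgraph_adj,
            List.coe_toFinset, List.mem_singleton, Set.mem_setOf_eq, Pi.bot_apply]
          constructor
          · rintro ⟨rfl, rfl, h⟩; exact absurd h (G.irrefl)
          · intro h; exact absurd h (by simp [Prop.bot_eq_false])
      rw [this]
      exact SimpleGraph.Subgraph.singletonSubgraph_connected
    | cons b t' =>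
      have hadj : G.Adj a b := hc.rel_head
      have htc : (b :: t').Chain' G.Adj := hc.tail
      have hind := ih (by simp) htc
      have key : (G.induce (({a, b} : Set V) ∪ ↑(b :: t').toFinset)).Connected := by
        refine induce_union_connected (induce_pair_connected_of_adj hadj).preconnected hind.preconnected ?_
        exact ⟨b, by simp⟩
      have hset : ({a, b} : Set V) ∪ ↑(b :: t').toFinset = ↑(a :: b :: t').toFinset := by
        ext x; simp; tauto
      rwa [hset] at key

private lemma extend_walk' [Fintype V] [DecidableEq V] (G : SimpleGraph V) (hconn : G.Connected) :
    ∀ (m : ℕ) (r : V) (p : G.Walk r r), Fintype.card V - p.support.toFinset.card ≤ m →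
      ∃ q : G.Walk r r, (∀ v, v ∈ q.support) ∧ q.length ≤ p.length + 2 * m := by
  intro m
  induction m with
  | zero =>
    intro r p hm
    refine ⟨p, fun v => ?_, by omega⟩
    have hle : p.support.toFinset.card ≤ Fintype.card V := Finset.card_le_univ _
    have : p.support.toFinset = Finset.univ := Finset.eq_univ_of_card _ (by omega)
    have hv : v ∈ p.support.toFinset := this ▸ Finset.mem_univ v
    exact List.mem_toFinset.1 hv
  | succ m ih =>
    intro r p hm
    by_cases hall : ∀ v, v ∈ p.support
    · exact ⟨p, hall, by omega⟩
    · push_neg at hall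
      obtain ⟨u, hu⟩ := hall
      obtain ⟨w⟩ := hconn.preconnected r u
      obtain ⟨d, hd, hdf, hds⟩ := w.exists_boundary_dart {v | v ∈ p.support}
        (by simp) (by simpa using hu)
      simp only [Set.mem_setOf_eq] at hdf hds
      set q' : G.Walk r r :=
        (p.takeUntil d.fst hdf).append
          (SimpleGraph.Walk.cons d.adj
            (SimpleGraph.Walk.cons d.adj.symm (p.dropUntil d.fst hdf))) with hq'
      have hsub : ∀ v, v ∈ p.support → v ∈ q'.support := by
        intro v hv
        rw [← p.take_spec hdf, SimpleGraph.Walk.mem_support_append_iff] at hv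
        rw [hq', SimpleGraph.Walk.mem_support_append_iff]
        rcases hv with h | h
        · exact Or.inl h
        · exact Or.inr (by simp [SimpleGraph.Walk.support_cons]; tauto)
      have hsnd : d.snd ∈ q'.support := by
        rw [hq', SimpleGraph.Walk.mem_support_append_iff]
        exact Or.inr (by simp [SimpleGraph.Walk.support_cons])
      have hcard : p.support.toFinset.card + 1 ≤ q'.support.toFinset.card := by
        have h1 : insert d.snd p.support.toFinset ⊆ q'.support.toFinset := by
          intro x hx
          rw [Finset.mem_insert] at hx
          rcases hx with rfl | hx
          · exact List.mem_toFinset.2 hsnd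
          · exact List.mem_toFinset.2 (hsub x (List.mem_toFinset.1 hx))
        calc p.support.toFinset.card + 1
            = (insert d.snd p.support.toFinset).card := by
              rw [Finset.card_insert_of_notMem (by simpa using hds)]
          _ ≤ _ := Finset.card_le_card h1
      have hlen : q'.length = p.length + 2 := by
        have := congr_arg SimpleGraph.Walk.length (p.take_spec hdf)
        rw [SimpleGraph.Walk.length_append] at this
        rw [hq', SimpleGraph.Walk.length_append, SimpleGraph.Walk.length_cons,
          SimpleGraph.Walk.length_cons]
        omega
      obtain ⟨q, hq1, hq2⟩ := ih r q' (by omega)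
      exact ⟨q, hq1, by omega⟩

end Aux

/-- Every finite, nonempty, connected simple graph can have its vertex set covered by
at most `⌈|V(G)|/k⌉` connected subgraphs, each with at most `2k` vertices. -/
theorem stmt2 {V : Type*} [Fintype V] [Nonempty V] (G : SimpleGraph V)
    (hconn : G.Connected) (k : ℕ) (hk : 1 ≤ k) :
    ∃ 𝒮 : Finset (Finset V),
      𝒮.card ≤ (Fintype.card V + k - 1) / k ∧
      (∀ s ∈ 𝒮, (G.induce (s : Set V)).Connected ∧ s.card ≤ 2 * k) ∧
      (∀ v : V, ∃ s ∈ 𝒮, v ∈ s) := by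
  classical
  set n := Fintype.card V with hn
  have hn1 : 1 ≤ n := Fintype.card_pos
  -- get a closed spanning walk of length ≤ 2(n-1)
  obtain ⟨r⟩ := ‹Nonempty V›
  have hnil : (SimpleGraph.Walk.nil : G.Walk r r).support.toFinset.card = 1 := by
    simp
  obtain ⟨q, hqall, hqlen⟩ := extend_walk' G hconn (n - 1) r SimpleGraph.Walk.nil (by omega)
  set l := q.support with hl
  have hLlen : l.length = q.length + 1 := q.length_support
  set L := l.length with hL
  have hL1 : 1 ≤ L := by omega
  have hL2 : L ≤ 2 * n - 1 := by
    have : q.length ≤ 0 + 2 * (n - 1) := hqlen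
    omega
  have hchain : l.Chain' G.Adj := q.isChain_adj_support
  set m := (L + (2 * k - 1)) / (2 * k) with hm
  refine ⟨(Finset.range m).image (fun i => ((l.drop (2 * k * i)).take (2 * k)).toFinset),
    ?_, ?_, ?_⟩
  · -- cardinality bound
    calc ((Finset.range m).image _).card ≤ m := by
          exact (Finset.card_image_le).trans (by simp)
      _ ≤ (n + k - 1) / k := by
          rw [hm]
          have h1 : L + (2 * k - 1) ≤ 2 * (n + k - 1) := by omega
          calc (L + (2 * k - 1)) / (2 * k) ≤ (2 * (n + k - 1)) / (2 * k) :=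
                Nat.div_le_div_right h1
            _ = (n + k - 1) / k := Nat.mul_div_mul_left _ _ (by omega)
  · -- each part connected and small
    intro s hs
    simp only [Finset.mem_image, Finset.mem_range] at hs
    obtain ⟨i, hi, rfl⟩ := hs
    have hlt : 2 * k * i < L := by
      have h1 : (i + 1) * (2 * k) ≤ L + (2 * k - 1) := by
        rw [← Nat.le_div_iff_mul_le (by omega : 0 < 2 * k)]
        omega
      have h3 : 2 * k * i + 2 * k ≤ L + (2 * k - 1) := by
        calc 2 * k * i + 2 * k = (i + 1) * (2 * k) := by ring
          _ ≤ _ := h1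
      omega
    set c := (l.drop (2 * k * i)).take (2 * k) with hc
    have hcne : c ≠ [] := by
      have : 0 < c.length := by
        rw [hc, List.length_take, List.length_drop]
        omega
      exact List.ne_nil_of_length_pos this
    have hcchain : c.Chain' G.Adj :=
      hchain.infix ((List.take_prefix _ _).isInfix.trans (List.drop_suffix _ _).isInfix)
    refine ⟨chain_induce_connected' G c hcne hcchain, ?_⟩
    calc c.toFinset.card ≤ c.length := List.toFinset_card_le _
      _ ≤ 2 * k := by rw [hc, List.length_take]; omega
  · -- coverage
    intro v
    have hv : v ∈ l := hqall v
    obtain ⟨j, hj, rfl⟩ := List.mem_iff_getElem.1 hv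
    set i := j / (2 * k) with hi
    have hmod : 2 * k * i + j % (2 * k) = j := by rw [hi]; exact Nat.div_add_mod j (2 * k)
    have hmodlt : j % (2 * k) < 2 * k := Nat.mod_lt _ (by omega)
    set a := 2 * k * i with ha
    have haj : a ≤ j := by rw [ha]; omega
    have hjlt : j < a + 2 * k := by rw [ha]; omega
    refine ⟨((l.drop a).take (2 * k)).toFinset, ?_, ?_⟩
    · simp only [Finset.mem_image, Finset.mem_range]
      refine ⟨i, ?_, rfl⟩
      have h1 : i ≤ (L - 1) / (2 * k) := by
        rw [hi]; exact Nat.div_le_div_right (by omega)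
      have h2 : (L - 1) / (2 * k) + 1 = ((L - 1) + 2 * k) / (2 * k) :=
        (Nat.add_div_right _ (by omega)).symm
      have h3 : (L - 1) + 2 * k = L + (2 * k - 1) := by omega
      rw [hm, ← h3, ← h2]
      omega
    · rw [List.mem_toFinset]
      have hlen : j - a < ((l.drop a).take (2 * k)).length := by
        rw [List.length_take, List.length_drop]
        omega
      have : ((l.drop a).take (2 * k))[j - a]'hlen = l[j]'hj := by
        rw [List.getElem_take]
        rw [← List.getElem_drop' (xs := l) (by omega : a + (j - a) < l.length)]
        congr 1
        omega
      exact this ▸ List.getElem_mem _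
end

section
/- Let d ≥ 2, R ≥ 2, 0 < λ < 1, and let r_1,...,r_d be positive integers with R ≤ r_i ≤ 2R for all i. Let R = [1,r_1]×⋯×[1,r_d] ∩ ℤ^d and A ⊂ ℤ^d. If |P_i(A ∩ R)| ≤ λ|R_i| for every face i ∈ {1,...,d}, then there is a constant c depending only on d and λ such that Σ_{i=1}^d |P_i(A ∩ R)| ≤ c·|∂_ex A ∩ R|. -/
/-- The discrete rectangle `[1,r₁]×⋯×[1,r_d] ∩ ℤ^d`. -/
def rect (d : ℕ) (r : Fin d → ℕ) : Set (Fin d → ℤ) :=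
  {x | ∀ i, 1 ≤ x i ∧ x i ≤ (r i : ℤ)}

/-- The face `R_i = {x ∈ R : x_i = 1}` perpendicular to direction `e_i`. -/
def face (d : ℕ) (r : Fin d → ℕ) (i : Fin d) : Set (Fin d → ℤ) :=
  {x ∈ rect d r | x i = 1}

/-- The line over `x` in direction `e_i` inside the rectangle. -/
def lineSeg (d : ℕ) (r : Fin d → ℕ) (i : Fin d) (x : Fin d → ℤ) : Set (Fin d → ℤ) :=
  {y | (∀ j, j ≠ i → y j = x j) ∧ 1 ≤ y i ∧ y i ≤ (r i : ℤ)}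

/-- The projection of `A ∩ R` onto the face `R_i`. -/
def projFace (d : ℕ) (r : Fin d → ℕ) (i : Fin d) (A : Set (Fin d → ℤ)) : Set (Fin d → ℤ) :=
  {x ∈ face d r i | (lineSeg d r i x ∩ A).Nonempty}

/-- The exterior boundary `∂_ex A = {y ∉ A : ∃ x ∈ A, |x-y|₁ = 1}`. -/
def extBoundary (d : ℕ) (A : Set (Fin d → ℤ)) : Set (Fin d → ℤ) :=
  {y | y ∉ A ∧ ∃ x ∈ A, (∑ i, |x i - y i|) = 1}

set_option linter.unusedSectionVars false
set_option linter.unusedVariables false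

section GenDefs

variable (ι : Type) [Fintype ι] [DecidableEq ι]

def rectG (r : ι → ℕ) : Set (ι → ℤ) := {x | ∀ i, 1 ≤ x i ∧ x i ≤ (r i : ℤ)}

def lineSegG (r : ι → ℕ) (i : ι) (x : ι → ℤ) : Set (ι → ℤ) :=
  {y | (∀ j, j ≠ i → y j = x j) ∧ 1 ≤ y i ∧ y i ≤ (r i : ℤ)}

def projFaceG (r : ι → ℕ) (i : ι) (A : Set (ι → ℤ)) : Set (ι → ℤ) :=
  {x ∈ {x ∈ rectG ι r | x i = 1} | (lineSegG ι r i x ∩ A).Nonempty}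

def extBoundaryG (A : Set (ι → ℤ)) : Set (ι → ℤ) :=
  {y | y ∉ A ∧ ∃ x ∈ A, (∑ i, |x i - y i|) = 1}

end GenDefs

section Basic

variable {ι : Type} [Fintype ι] [DecidableEq ι] {r : ι → ℕ} {A : Set (ι → ℤ)}

lemma rectG_finite (r : ι → ℕ) : (rectG ι r).Finite := by
  apply Set.Finite.subset (Finset.finite_toSet
    (Fintype.piFinset (fun q => Finset.Icc (1:ℤ) (r q))))
  intro x hx
  simp only [Finset.coe_sort_coe, Finset.mem_coe, Fintype.mem_piFinset, Finset.mem_Icc]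
  exact hx

lemma projFaceG_subset_rect (i : ι) : projFaceG ι r i A ⊆ rectG ι r := fun x hx => hx.1.1

lemma projFaceG_finite (i : ι) : (projFaceG ι r i A).Finite :=
  (rectG_finite r).subset (projFaceG_subset_rect i)

lemma boundary_finite : (extBoundaryG ι A ∩ rectG ι r).Finite :=
  (rectG_finite r).subset Set.inter_subset_right

/-- fiberwise decomposition of ncard -/
lemma ncard_eq_sum_fibers {α : Type*} {s : Set α} (hs : s.Finite) (g : α → ℤ) (F : Finset ℤ)
    (h : ∀ x ∈ s, g x ∈ F) :
    s.ncard = ∑ b ∈ F, {x ∈ s | g x = b}.ncard := by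
  classical
  have hcard := Finset.card_eq_sum_card_fiberwise (f := g) (s := hs.toFinset) (t := F)
    (by intro x hx; exact h x (hs.mem_toFinset.mp hx))
  rw [Set.ncard_eq_toFinset_card _ hs, hcard]
  refine Finset.sum_congr rfl fun b _ => ?_
  have : {x ∈ s | g x = b} = ↑(hs.toFinset.filter (fun a => g a = b)) := by
    ext x; simp [Set.Finite.mem_toFinset]
  rw [this, Set.ncard_coe_finset]

end Basic
section IVT

lemma ivt_up (P : ℤ → Prop) {a b : ℤ} (ha : P a) (hb : ¬ P b) (hab : a < b) :
    ∃ k, a ≤ k ∧ k < b ∧ P k ∧ ¬ P (k + 1) := by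
  classical
  have hne : ((Finset.Icc a (b - 1)).filter (fun k => P k)).Nonempty :=
    ⟨a, by simp [Finset.mem_Icc, ha]; omega⟩
  set S := (Finset.Icc a (b - 1)).filter (fun k => P k) with hS
  set k := S.max' hne with hk
  have hkS : k ∈ S := S.max'_mem hne
  simp only [hS, Finset.mem_filter, Finset.mem_Icc] at hkS
  refine ⟨k, hkS.1.1, by omega, hkS.2, ?_⟩
  intro hP1
  rcases eq_or_lt_of_le (show k + 1 ≤ b by omega) with h | h
  · exact hb (h ▸ hP1)
  · have : k + 1 ∈ S := by simp [hS, Finset.mem_Icc, hP1]; omega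
    have := S.le_max' _ this
    omega

lemma ivt_down (P : ℤ → Prop) {a b : ℤ} (ha : P a) (hb : ¬ P b) (hba : b < a) :
    ∃ k, b ≤ k ∧ k < a ∧ ¬ P k ∧ P (k + 1) := by
  obtain ⟨k, h1, h2, h3, h4⟩ := ivt_up (fun m => P (a + b - m)) (by simpa using ha)
    (by simpa using hb) hba
  refine ⟨a + b - k - 1, by omega, by omega, ?_, ?_⟩
  · have : a + b - (k + 1) = a + b - k - 1 := by ring
    rwa [this] at h4
  · have : a + b - k - 1 + 1 = a + b - k := by ring
    rwa [this]

end IVT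
section Boundary

variable {ι : Type} [Fintype ι] [DecidableEq ι] {r : ι → ℕ} {A : Set (ι → ℤ)}

lemma dist_update (x : ι → ℤ) (j : ι) (m m' : ℤ) :
    (∑ q, |Function.update x j m q - Function.update x j m' q|) = |m - m'| := by
  classical
  have h : ∀ q, |Function.update x j m q - Function.update x j m' q|
      = if q = j then |m - m'| else 0 := by
    intro q
    by_cases hq : q = j
    · subst hq; simp [Function.update_self]
    · simp [Function.update_of_ne hq, hq]
  rw [Finset.sum_congr rfl (fun q _ => h q), Finset.sum_ite_eq' Finset.univ j]
  simp

lemma exists_boundary_on_line (j : ι) (x : ι → ℤ)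
    (hx : x ∈ projFaceG ι r j A) (hnf : ¬ lineSegG ι r j x ⊆ A) :
    ∃ y ∈ extBoundaryG ι A ∩ rectG ι r, (∀ q, q ≠ j → y q = x q) := by
  classical
  obtain ⟨⟨hxr, hxj⟩, a, ⟨haline, haA⟩⟩ := hx
  obtain ⟨z, hzline, hzA⟩ := Set.not_subset.mp hnf
  set pt : ℤ → (ι → ℤ) := fun m => Function.update x j m with hpt
  have hmem : ∀ w : ι → ℤ, w ∈ lineSegG ι r j x → w = pt (w j) := by
    intro w hw
    funext q
    by_cases hq : q = j
    · subst hq; simp [hpt, Function.update_self]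
    · rw [hpt]; simp only [Function.update_of_ne hq]; exact hw.1 q hq
  have hptmem : ∀ m : ℤ, 1 ≤ m → m ≤ (r j : ℤ) → pt m ∈ lineSegG ι r j x := by
    intro m h1 h2
    exact ⟨fun q hq => by simp [hpt, Function.update_of_ne hq], by simp [hpt, h1],
      by simp [hpt, h2]⟩
  have hptrect : ∀ m : ℤ, 1 ≤ m → m ≤ (r j : ℤ) → pt m ∈ rectG ι r := by
    intro m h1 h2 q
    by_cases hq : q = j
    · subst hq; simp [hpt, h1, h2]
    · simp only [hpt, Function.update_of_ne hq]; exact hxr q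
  have hP : (pt (a j)) ∈ A := by rw [← hmem a haline]; exact haA
  have hQ : (pt (z j)) ∉ A := by rw [← hmem z hzline]; exact hzA
  have haj := haline.2
  have hzj := hzline.2
  have hne : a j ≠ z j := fun h => hQ (h ▸ hP)
  rcases lt_or_gt_of_ne hne with h | h
  · obtain ⟨k, h1, h2, h3, h4⟩ := ivt_up (fun m => pt m ∈ A) hP hQ h
    refine ⟨pt (k + 1), ⟨⟨h4, pt k, h3, ?_⟩, hptrect _ (by omega) (by omega)⟩,
      fun q hq => by simp [hpt, Function.update_of_ne hq]⟩
    rw [dist_update]; simp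
  · obtain ⟨k, h1, h2, h3, h4⟩ := ivt_down (fun m => pt m ∈ A) hP hQ h
    refine ⟨pt k, ⟨⟨h3, pt (k + 1), h4, ?_⟩, hptrect _ (by omega) (by omega)⟩,
      fun q hq => by simp [hpt, Function.update_of_ne hq]⟩
    rw [dist_update]; simp

lemma nonfull_card_le (i j : ι) (hij : i ≠ j) (k : ℤ) :
    {x ∈ projFaceG ι r j A | x i = k ∧ ¬ lineSegG ι r j x ⊆ A}.ncard
      ≤ {y ∈ extBoundaryG ι A ∩ rectG ι r | y i = k}.ncard := by
  classical
  set f : (ι → ℤ) → (ι → ℤ) := fun x =>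
    if h : x ∈ projFaceG ι r j A ∧ ¬ lineSegG ι r j x ⊆ A
    then (exists_boundary_on_line j x h.1 h.2).choose else x with hf
  refine Set.ncard_le_ncard_of_injOn f ?_ ?_
    ((rectG_finite r).subset (fun y hy => hy.1.2))
  · rintro x ⟨hx1, hx2, hx3⟩
    have h : x ∈ projFaceG ι r j A ∧ ¬ lineSegG ι r j x ⊆ A := ⟨hx1, hx3⟩
    obtain ⟨hy, hagree⟩ := (exists_boundary_on_line j x h.1 h.2).choose_spec
    refine ⟨by rw [hf]; simp only [dif_pos h]; exact hy, ?_⟩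
    rw [hf]; simp only [dif_pos h]
    rw [hagree i (by exact hij)]; exact hx2
  · rintro x ⟨hx1, hx2, hx3⟩ x' ⟨hx1', hx2', hx3'⟩ heq
    have h : x ∈ projFaceG ι r j A ∧ ¬ lineSegG ι r j x ⊆ A := ⟨hx1, hx3⟩
    have h' : x' ∈ projFaceG ι r j A ∧ ¬ lineSegG ι r j x' ⊆ A := ⟨hx1', hx3'⟩
    obtain ⟨hy, hagree⟩ := (exists_boundary_on_line j x h.1 h.2).choose_spec
    obtain ⟨hy', hagree'⟩ := (exists_boundary_on_line j x' h'.1 h'.2).choose_spec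
    rw [hf] at heq; simp only [dif_pos h, dif_pos h'] at heq
    funext q
    by_cases hq : q = j
    · subst hq; rw [hx1.1.2, hx1'.1.2]
    · rw [← hagree q hq, ← hagree' q hq, heq]

end Boundary
section Counting

variable {ι : Type} [Fintype ι] [DecidableEq ι] {r : ι → ℕ} {A : Set (ι → ℤ)}

lemma full_card_le (i j : ι) (hij : i ≠ j) (k : ℤ) (hr : ∀ q, 1 ≤ r q) :
    {x ∈ projFaceG ι r j A | x i = k ∧ lineSegG ι r j x ⊆ A}.ncard * (r j)
      ≤ (projFaceG ι r i A).ncard := by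
  classical
  set S := {x ∈ projFaceG ι r j A | x i = k ∧ lineSegG ι r j x ⊆ A} with hSdef
  have hSfin : S.Finite := ((rectG_finite r).subset (projFaceG_subset_rect j)).subset
    (fun x hx => hx.1)
  have hTfin : (projFaceG ι r i A).Finite := projFaceG_finite i
  rw [Set.ncard_eq_toFinset_card _ hSfin, Set.ncard_eq_toFinset_card _ hTfin]
  have hicc : (Finset.Icc (1:ℤ) (r j)).card = r j := by
    rw [Int.card_Icc]; omega
  rw [← hicc, ← Finset.card_product]
  set f : (ι → ℤ) × ℤ → (ι → ℤ) := fun p q => if q = i then 1 else if q = j then p.2 else p.1 q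
    with hfdef
  apply Finset.card_le_card_of_injOn f
  · rintro ⟨x, m⟩ hp
    simp only [Finset.mem_coe, Finset.mem_product, Set.Finite.mem_toFinset, Finset.mem_Icc] at hp
    obtain ⟨⟨hproj, hxi, hfull⟩, hm1, hm2⟩ := hp
    obtain ⟨⟨hxr, hxj⟩, hne⟩ := hproj
    rw [Finset.mem_coe, Set.Finite.mem_toFinset]
    have hrect : f (x, m) ∈ rectG ι r := by
      intro q
      by_cases hqi : q = i
      · subst hqi; simp only [hfdef, if_pos rfl]
        exact ⟨le_refl _, by exact_mod_cast hr q⟩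
      · by_cases hqj : q = j
        · subst hqj; simp only [hfdef, if_neg hqi, if_pos rfl]; exact ⟨hm1, hm2⟩
        · simp only [hfdef, if_neg hqi, if_neg hqj]; exact hxr q
    refine ⟨⟨hrect, by simp [hfdef]⟩, ?_⟩
    set w : ι → ℤ := fun q => if q = i then k else if q = j then m else x q with hwdef
    have hwA : w ∈ A := by
      apply hfull
      refine ⟨fun q hq => ?_, ?_, ?_⟩
      · by_cases hqi : q = i
        · subst hqi; simp only [hwdef, if_pos rfl]; exact hxi.symm
        · simp [hwdef, hqi, hq]
      · simp [hwdef, hij.symm, hm1]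
      · simp [hwdef, hij.symm, hm2]
    refine ⟨w, ⟨fun q hq => ?_, ?_, ?_⟩, hwA⟩
    · show w q = f (x, m) q
      rw [hwdef, hfdef]
      simp only [if_neg hq]
    · rw [show w i = k from by simp [hwdef], ← hxi]
      exact (hxr i).1
    · rw [show w i = k from by simp [hwdef], ← hxi]
      exact (hxr i).2
  · rintro ⟨x, m⟩ hp ⟨x', m'⟩ hp' heq
    rw [Finset.mem_coe, Finset.mem_product, Set.Finite.mem_toFinset] at hp hp'
    have hmm : m = m' := by
      have := congrFun heq j
      simpa [hfdef, hij.symm] using this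
    have hxx : x = x' := by
      funext q
      by_cases hqi : q = i
      · have e1 : x i = k := hp.1.2.1
        have e2 : x' i = k := hp'.1.2.1
        rw [hqi, e1, e2]
      · by_cases hqj : q = j
        · have e1 : x j = 1 := hp.1.1.1.2
          have e2 : x' j = 1 := hp'.1.1.1.2
          rw [hqj, e1, e2]
        · have := congrFun heq q
          simpa [hfdef, hqi, hqj] using this
    rw [hmm, hxx]

lemma slabproj_card_le (i j : ι) (hij : i ≠ j) (k : ℤ) :
    {x ∈ projFaceG ι r j A | x i = k}.ncard
      ≤ ∏ q ∈ (Finset.univ.erase i).erase j, r q := by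
  classical
  set I : ι → Finset ℤ := fun q => if q = i then {k} else if q = j then {1}
    else Finset.Icc (1:ℤ) (r q) with hIdef
  have hsub : {x ∈ projFaceG ι r j A | x i = k} ⊆ ↑(Fintype.piFinset I) := by
    rintro x ⟨⟨⟨hxr, hxj⟩, -⟩, hxi⟩
    simp only [Finset.mem_coe, Fintype.mem_piFinset]
    intro q
    by_cases hqi : q = i
    · subst hqi; simp [hIdef, hxi]
    · by_cases hqj : q = j
      · subst hqj; simp [hIdef, hqi, hxj]
      · simp only [hIdef, if_neg hqi, if_neg hqj, Finset.mem_Icc]; exact hxr q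
  calc {x ∈ projFaceG ι r j A | x i = k}.ncard ≤ (↑(Fintype.piFinset I) : Set (ι → ℤ)).ncard :=
        Set.ncard_le_ncard hsub (Finset.finite_toSet _)
    _ = (Fintype.piFinset I).card := Set.ncard_coe_finset _
    _ = ∏ q, (I q).card := Fintype.card_piFinset I
    _ = ∏ q ∈ (Finset.univ.erase i).erase j, r q := by
        rw [← Finset.mul_prod_erase Finset.univ _ (Finset.mem_univ i),
          ← Finset.mul_prod_erase (Finset.univ.erase i) _
            (Finset.mem_erase.mpr ⟨Ne.symm hij, Finset.mem_univ j⟩)]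
        have h1 : (I i).card = 1 := by simp [hIdef]
        have h2 : (I j).card = 1 := by simp [hIdef, hij.symm]
        rw [h1, h2, one_mul, one_mul]
        apply Finset.prod_congr rfl
        intro q hq
        simp only [Finset.mem_erase] at hq
        rw [hIdef]
        simp only [if_neg hq.2.1, if_neg hq.1, Int.card_Icc]
        omega

end Counting
section PerSlab

variable {ι : Type} [Fintype ι] [DecidableEq ι] {r : ι → ℕ} {A : Set (ι → ℤ)}

lemma perslab_bound (i j : ι) (hij : i ≠ j) (k : ℤ) {lam : ℝ}
    (hr : ∀ q, 1 ≤ r q)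
    (hAi : ((projFaceG ι r i A).ncard : ℝ) ≤ lam * ∏ q ∈ Finset.univ.erase i, (r q : ℝ)) :
    ({x ∈ projFaceG ι r j A | x i = k}.ncard : ℝ)
      ≤ lam * (∏ q ∈ (Finset.univ.erase i).erase j, (r q : ℝ))
        + ({y ∈ extBoundaryG ι A ∩ rectG ι r | y i = k}.ncard : ℝ) := by
  classical
  set Full := {x ∈ projFaceG ι r j A | x i = k ∧ lineSegG ι r j x ⊆ A} with hFull
  set NonFull := {x ∈ projFaceG ι r j A | x i = k ∧ ¬ lineSegG ι r j x ⊆ A} with hNF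
  have hsplit : {x ∈ projFaceG ι r j A | x i = k} = Full ∪ NonFull := by
    ext x; simp only [hFull, hNF, Set.mem_setOf_eq, Set.mem_union]; tauto
  have hfin : (projFaceG ι r j A).Finite := projFaceG_finite j
  have hUle : {x ∈ projFaceG ι r j A | x i = k}.ncard ≤ Full.ncard + NonFull.ncard := by
    rw [hsplit]; exact Set.ncard_union_le _ _
  have hNFle : NonFull.ncard ≤ {y ∈ extBoundaryG ι A ∩ rectG ι r | y i = k}.ncard :=
    nonfull_card_le i j hij k
  have hFle : (Full.ncard : ℝ) ≤ lam * ∏ q ∈ (Finset.univ.erase i).erase j, (r q : ℝ) := by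
    have h1 : (Full.ncard * (r j) : ℕ) ≤ (projFaceG ι r i A).ncard :=
      full_card_le i j hij k hr
    have h2 : ((Full.ncard : ℝ)) * (r j : ℝ) ≤
        lam * ((∏ q ∈ (Finset.univ.erase i).erase j, (r q : ℝ)) * (r j : ℝ)) := by
      rw [Finset.prod_erase_mul (Finset.univ.erase i) _
        (Finset.mem_erase.mpr ⟨Ne.symm hij, Finset.mem_univ j⟩)]
      calc ((Full.ncard : ℝ)) * (r j : ℝ) = ((Full.ncard * r j : ℕ) : ℝ) := by push_cast; ring
        _ ≤ ((projFaceG ι r i A).ncard : ℝ) := by exact_mod_cast h1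
        _ ≤ _ := hAi
    have hrj : (0 : ℝ) < (r j : ℝ) := by exact_mod_cast hr j
    rw [← mul_assoc] at h2
    exact le_of_mul_le_mul_right h2 hrj
  calc ({x ∈ projFaceG ι r j A | x i = k}.ncard : ℝ)
      ≤ (Full.ncard : ℝ) + (NonFull.ncard : ℝ) := by exact_mod_cast hUle
    _ ≤ lam * (∏ q ∈ (Finset.univ.erase i).erase j, (r q : ℝ))
        + ({y ∈ extBoundaryG ι A ∩ rectG ι r | y i = k}.ncard : ℝ) := by
        apply add_le_add hFle
        exact_mod_cast hNFle

end PerSlab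
section Transport

variable {ι : Type} [Fintype ι] [DecidableEq ι] {r : ι → ℕ} {A : Set (ι → ℤ)}

def extMap (i : ι) (k : ℤ) (y : {q : ι // q ≠ i} → ℤ) : ι → ℤ :=
  fun q => if h : q = i then k else y ⟨q, h⟩

lemma extMap_apply_val (i : ι) (k : ℤ) (y : {q : ι // q ≠ i} → ℤ) (q' : {q : ι // q ≠ i}) :
    extMap i k y q'.val = y q' := by
  rw [extMap, dif_neg q'.2]

lemma extMap_apply_same (i : ι) (k : ℤ) (y : {q : ι // q ≠ i} → ℤ) :
    extMap i k y i = k := by rw [extMap, dif_pos rfl]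

lemma extMap_injective (i : ι) (k : ℤ) : Function.Injective (extMap i k) := by
  intro y y' h
  funext q'
  rw [← extMap_apply_val i k y q', ← extMap_apply_val i k y' q', h]

lemma extMap_mem_rect (i : ι) (k : ℤ) (hk1 : 1 ≤ k) (hk2 : k ≤ (r i : ℤ))
    (y : {q : ι // q ≠ i} → ℤ) :
    extMap i k y ∈ rectG ι r ↔ y ∈ rectG {q : ι // q ≠ i} (fun q => r q.val) := by
  constructor
  · intro h q'
    have := h q'.val
    rwa [extMap_apply_val] at this
  · intro h q
    by_cases hq : q = i
    · subst hq; rw [extMap_apply_same]; exact ⟨hk1, hk2⟩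
    · rw [show q = (⟨q, hq⟩ : {q : ι // q ≠ i}).val from rfl, extMap_apply_val]
      exact h ⟨q, hq⟩

lemma image_projFace (i : ι) (k : ℤ) (hk1 : 1 ≤ k) (hk2 : k ≤ (r i : ℤ))
    (j' : {q : ι // q ≠ i}) :
    extMap i k '' (projFaceG {q : ι // q ≠ i} (fun q => r q.val) j' (extMap i k ⁻¹' A))
      = {x ∈ projFaceG ι r j'.val A | x i = k} := by
  classical
  ext x
  constructor
  · rintro ⟨y, ⟨⟨hyr, hyj⟩, z', hz'line, hz'A⟩, rfl⟩
    refine ⟨⟨⟨(extMap_mem_rect i k hk1 hk2 y).mpr hyr, by rw [extMap_apply_val]; exact hyj⟩,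
      extMap i k z', ⟨?_, ?_, ?_⟩, hz'A⟩, extMap_apply_same i k y⟩
    · intro q hq
      by_cases hqi : q = i
      · subst hqi; rw [extMap_apply_same, extMap_apply_same]
      · rw [show q = (⟨q, hqi⟩ : {q : ι // q ≠ i}).val from rfl,
          extMap_apply_val, extMap_apply_val]
        exact hz'line.1 ⟨q, hqi⟩ (fun hc => hq (congrArg Subtype.val hc))
    · rw [extMap_apply_val]; exact hz'line.2.1
    · rw [extMap_apply_val]; exact hz'line.2.2
  · rintro ⟨⟨⟨hxr, hxj⟩, z, hzline, hzA⟩, hxik⟩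
    have hij' : (i : ι) ≠ j'.val := fun h => j'.2 h.symm
    have hzi : z i = k := by rw [hzline.1 i hij']; exact hxik
    have hext : extMap i k (fun q' => x q'.val) = x := by
      funext q
      by_cases hq : q = i
      · subst hq; rw [extMap_apply_same]; exact hxik.symm
      · rw [show q = (⟨q, hq⟩ : {q : ι // q ≠ i}).val from rfl, extMap_apply_val]
    have hextz : extMap i k (fun q' => z q'.val) = z := by
      funext q
      by_cases hq : q = i
      · subst hq; rw [extMap_apply_same]; exact hzi.symm
      · rw [show q = (⟨q, hq⟩ : {q : ι // q ≠ i}).val from rfl, extMap_apply_val]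
    refine ⟨fun q' => x q'.val, ⟨⟨fun q' => hxr q'.val, hxj⟩,
      fun q' => z q'.val, ⟨?_, hzline.2.1, hzline.2.2⟩, ?_⟩, hext⟩
    · intro p' hp'
      exact hzline.1 p'.val (fun hc => hp' (Subtype.ext hc))
    · show extMap i k (fun q' => z q'.val) ∈ A
      rw [hextz]; exact hzA

lemma image_boundary_subset (i : ι) (k : ℤ) (hk1 : 1 ≤ k) (hk2 : k ≤ (r i : ℤ)) :
    extMap i k '' (extBoundaryG {q : ι // q ≠ i} (extMap i k ⁻¹' A)
        ∩ rectG {q : ι // q ≠ i} (fun q => r q.val))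
      ⊆ {y ∈ extBoundaryG ι A ∩ rectG ι r | y i = k} := by
  classical
  rintro x ⟨y, ⟨⟨hynA, x', hx'A, hdist⟩, hyr⟩, rfl⟩
  refine ⟨⟨⟨hynA, extMap i k x', hx'A, ?_⟩, (extMap_mem_rect i k hk1 hk2 y).mpr hyr⟩,
    extMap_apply_same i k y⟩
  rw [← Finset.add_sum_erase Finset.univ _ (Finset.mem_univ i)]
  have h0 : |extMap i k x' i - extMap i k y i| = 0 := by
    rw [extMap_apply_same, extMap_apply_same]; simp
  rw [h0, zero_add]
  rw [Finset.sum_subtype (Finset.univ.erase i) (p := fun q => q ≠ i)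
    (by intro q; simp) (fun q => |extMap i k x' q - extMap i k y q|)]
  rw [← hdist]
  apply Finset.sum_congr rfl
  intro q' _
  rw [extMap_apply_val, extMap_apply_val]

end Transport
section Transport2

variable {ι : Type} [Fintype ι] [DecidableEq ι]

lemma card_ne_subtype (i : ι) : Fintype.card {q : ι // q ≠ i} = Fintype.card ι - 1 := by
  have h := Fintype.card_subtype_compl (fun q : ι => q = i)
  rw [Fintype.card_subtype_eq] at h
  exact h

lemma sum_subtype_ne (i : ι) (g : ι → ℝ) :
    ∑ j' : {q : ι // q ≠ i}, g j'.val = ∑ j ∈ Finset.univ.erase i, g j := by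
  rw [Finset.sum_subtype (Finset.univ.erase i) (p := fun q => q ≠ i) (by intro q; simp) g]

lemma prod_subtype_ne (i : ι) (g : ι → ℝ) :
    ∏ j' : {q : ι // q ≠ i}, g j'.val = ∏ j ∈ Finset.univ.erase i, g j := by
  rw [Finset.prod_subtype (Finset.univ.erase i) (p := fun q => q ≠ i) (by intro q; simp) g]

lemma prod_subtype_erase (i : ι) (g : ι → ℝ) (j' : {q : ι // q ≠ i}) (hg : g j'.val ≠ 0) :
    ∏ p' ∈ Finset.univ.erase j', g p'.val
      = ∏ p ∈ (Finset.univ.erase i).erase j'.val, g p := by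
  have h1 : (∏ p' ∈ Finset.univ.erase j', g p'.val) * g j'.val
      = ∏ p' : {q : ι // q ≠ i}, g p'.val := by
    exact Finset.prod_erase_mul Finset.univ _ (Finset.mem_univ j')
  have h2 : (∏ p ∈ (Finset.univ.erase i).erase j'.val, g p) * g j'.val
      = ∏ p ∈ Finset.univ.erase i, g p := by
    exact Finset.prod_erase_mul _ _ (Finset.mem_erase.mpr ⟨j'.2, Finset.mem_univ _⟩)
  apply mul_right_cancel₀ hg
  rw [h1, h2, prod_subtype_ne]

end Transport2

section Core

lemma core_bound (m : ℕ) (hm : 2 ≤ m) (lam c' : ℝ) (hlam0 : 0 < lam) (hlam1 : lam < 1)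
    (hc' : 0 ≤ c')
    (HGood : ∀ (ι : Type) (_ : Fintype ι) (_ : DecidableEq ι), Fintype.card ι = m →
      ∀ R : ℕ, 2 ≤ R → ∀ r : ι → ℕ, (∀ q, R ≤ r q ∧ r q ≤ 2 * R) →
      ∀ A : Set (ι → ℤ),
      (∀ q, ((projFaceG ι r q A).ncard : ℝ) ≤ lam * ∏ p ∈ Finset.univ.erase q, (r p : ℝ)) →
      ∀ (i : ι) (k : ℤ), 1 ≤ k → k ≤ (r i : ℤ) →
      (∀ j ∈ Finset.univ.erase i, ({x ∈ projFaceG ι r j A | x i = k}.ncard : ℝ)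
          ≤ ((1 + lam) / 2) * ∏ p ∈ (Finset.univ.erase i).erase j, (r p : ℝ)) →
      ∑ j ∈ Finset.univ.erase i, ({x ∈ projFaceG ι r j A | x i = k}.ncard : ℝ)
        ≤ c' * ({y ∈ extBoundaryG ι A ∩ rectG ι r | y i = k}.ncard : ℝ)) :
    ∀ (ι : Type) (_ : Fintype ι) (_ : DecidableEq ι), Fintype.card ι = m →
      ∀ R : ℕ, 2 ≤ R → ∀ r : ι → ℕ, (∀ q, R ≤ r q ∧ r q ≤ 2 * R) →
      ∀ A : Set (ι → ℤ),
      (∀ q, ((projFaceG ι r q A).ncard : ℝ) ≤ lam * ∏ p ∈ Finset.univ.erase q, (r p : ℝ)) →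
      (∑ q, ((projFaceG ι r q A).ncard : ℝ))
        ≤ ((m : ℝ) * (c' + (m - 1) * 2 ^ (m - 1) / (1 - lam)) / ((m : ℝ) - 1))
          * ((extBoundaryG ι A ∩ rectG ι r).ncard : ℝ) := by
  intro ι instF instD hcard R hR r hr A hA
  classical
  set lam' : ℝ := (1 + lam) / 2 with hlam'
  set K : ℝ := c' + (m - 1) * 2 ^ (m - 1) / (1 - lam) with hK
  have h1lam : (0:ℝ) < 1 - lam := by linarith
  have hm1 : (1:ℝ) ≤ (m:ℝ) - 1 := by
    have : (2:ℝ) ≤ (m:ℝ) := by exact_mod_cast hm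
    linarith
  have hKpos : 0 < K := by
    have h2 : (0:ℝ) < ((m:ℝ) - 1) * 2 ^ (m - 1) / (1 - lam) := by positivity
    rw [hK]
    linarith
  have hr1 : ∀ q, 1 ≤ r q := fun q => le_trans (by omega) (hr q).1
  have hBfin : (extBoundaryG ι A ∩ rectG ι r).Finite := boundary_finite
  -- per-direction bound: for every i, the sum over j ≠ i is at most K * |B|
  have key : ∀ i : ι, ∑ j ∈ Finset.univ.erase i, ((projFaceG ι r j A).ncard : ℝ)
      ≤ K * ((extBoundaryG ι A ∩ rectG ι r).ncard : ℝ) := by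
    intro i
    -- fiber decomposition of each projection
    have hfiber : ∀ j ∈ Finset.univ.erase i, ((projFaceG ι r j A).ncard : ℝ)
        = ∑ k ∈ Finset.Icc (1:ℤ) (r i), ({x ∈ projFaceG ι r j A | x i = k}.ncard : ℝ) := by
      intro j _
      have := ncard_eq_sum_fibers (projFaceG_finite j (r := r) (A := A)) (fun x => x i)
        (Finset.Icc (1:ℤ) (r i)) (fun x hx => by
          rw [Finset.mem_Icc]; exact (hx.1.1 i))
      rw [this]; push_cast; rfl
    have hBfiber : ∑ k ∈ Finset.Icc (1:ℤ) (r i),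
        ({y ∈ extBoundaryG ι A ∩ rectG ι r | y i = k}.ncard : ℝ)
        = ((extBoundaryG ι A ∩ rectG ι r).ncard : ℝ) := by
      have := ncard_eq_sum_fibers hBfin (fun y => y i) (Finset.Icc (1:ℤ) (r i))
        (fun y hy => by rw [Finset.mem_Icc]; exact (hy.2 i))
      rw [this]; push_cast; rfl
    -- per-slab bound
    have hslab : ∀ k ∈ Finset.Icc (1:ℤ) (r i),
        ∑ j ∈ Finset.univ.erase i, ({x ∈ projFaceG ι r j A | x i = k}.ncard : ℝ)
          ≤ K * ({y ∈ extBoundaryG ι A ∩ rectG ι r | y i = k}.ncard : ℝ) := by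
      intro k hk
      rw [Finset.mem_Icc] at hk
      have hBknn : (0:ℝ) ≤ ({y ∈ extBoundaryG ι A ∩ rectG ι r | y i = k}.ncard : ℝ) := by
        positivity
      by_cases hgood : ∀ j ∈ Finset.univ.erase i,
          ({x ∈ projFaceG ι r j A | x i = k}.ncard : ℝ)
            ≤ lam' * ∏ p ∈ (Finset.univ.erase i).erase j, (r p : ℝ)
      · have := HGood ι instF instD hcard R hR r hr A hA i k hk.1 hk.2 hgood
        calc _ ≤ c' * ({y ∈ extBoundaryG ι A ∩ rectG ι r | y i = k}.ncard : ℝ) := this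
          _ ≤ K * _ := by
            apply mul_le_mul_of_nonneg_right _ hBknn
            rw [hK]
            have h2 : (0:ℝ) < (2:ℝ) ^ (m - 1) := by positivity
            have : 0 ≤ ((m:ℝ) - 1) * 2 ^ (m - 1) / (1 - lam) := by positivity
            linarith
      · push_neg at hgood
        obtain ⟨j₀, hj₀, hbad⟩ := hgood
        have hj₀i : j₀ ≠ i := (Finset.mem_erase.mp hj₀).1
        -- the boundary in the slab is large
        have hps := perslab_bound (r := r) (A := A) i j₀ (Ne.symm hj₀i) k hr1 (hA i)
        have hMlb : ((R:ℝ)) ^ (m - 2)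
            ≤ ∏ p ∈ (Finset.univ.erase i).erase j₀, (r p : ℝ) := by
          have hcard2 : ((Finset.univ.erase i).erase j₀).card = m - 2 := by
            rw [Finset.card_erase_of_mem hj₀, Finset.card_erase_of_mem (Finset.mem_univ i),
              Finset.card_univ, hcard, Nat.sub_sub]
          calc ((R:ℝ)) ^ (m - 2) = ∏ _p ∈ (Finset.univ.erase i).erase j₀, (R:ℝ) := by
                rw [Finset.prod_const, hcard2]
            _ ≤ _ := Finset.prod_le_prod (fun p _ => by positivity)
                (fun p _ => by exact_mod_cast (hr p).1)
        have hBklb : (1 - lam) / 2 * ((R:ℝ)) ^ (m - 2)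
            ≤ ({y ∈ extBoundaryG ι A ∩ rectG ι r | y i = k}.ncard : ℝ) := by
          have hMnn : (0:ℝ) ≤ ∏ p ∈ (Finset.univ.erase i).erase j₀, (r p : ℝ) := by
            apply Finset.prod_nonneg; intro p _; positivity
          nlinarith [hbad, hps, hMlb]
        -- each slab projection is at most (2R)^(m-2)
        have hub : ∀ j ∈ Finset.univ.erase i,
            ({x ∈ projFaceG ι r j A | x i = k}.ncard : ℝ)
              ≤ (2:ℝ) ^ (m - 2) * ((R:ℝ)) ^ (m - 2) := by
          intro j hj
          have hji : j ≠ i := (Finset.mem_erase.mp hj).1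
          have h1 := slabproj_card_le (r := r) (A := A) i j (Ne.symm hji) k
          have hcard2 : ((Finset.univ.erase i).erase j).card = m - 2 := by
            rw [Finset.card_erase_of_mem hj, Finset.card_erase_of_mem (Finset.mem_univ i),
              Finset.card_univ, hcard, Nat.sub_sub]
          calc ({x ∈ projFaceG ι r j A | x i = k}.ncard : ℝ)
              ≤ ∏ p ∈ (Finset.univ.erase i).erase j, (r p : ℝ) := by
                exact_mod_cast le_trans (Nat.cast_le.mpr h1) (le_of_eq (Nat.cast_prod _ _))
            _ ≤ ∏ _p ∈ (Finset.univ.erase i).erase j, ((2 * R : ℕ) : ℝ) := by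
                apply Finset.prod_le_prod (fun p _ => by positivity)
                  (fun p _ => by exact_mod_cast (hr p).2)
            _ = (2:ℝ) ^ (m - 2) * ((R:ℝ)) ^ (m - 2) := by
                rw [Finset.prod_const, hcard2]
                push_cast
                rw [mul_pow]
        -- combine
        have hcard1 : (Finset.univ.erase i).card = m - 1 := by
          rw [Finset.card_erase_of_mem (Finset.mem_univ i), Finset.card_univ, hcard]
        calc ∑ j ∈ Finset.univ.erase i, ({x ∈ projFaceG ι r j A | x i = k}.ncard : ℝ)
            ≤ ∑ _j ∈ Finset.univ.erase i, (2:ℝ) ^ (m - 2) * ((R:ℝ)) ^ (m - 2) :=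
              Finset.sum_le_sum hub
          _ = ((m:ℝ) - 1) * ((2:ℝ) ^ (m - 2) * ((R:ℝ)) ^ (m - 2)) := by
              rw [Finset.sum_const, hcard1]
              have : ((m - 1 : ℕ) : ℝ) = (m : ℝ) - 1 := by
                have : (1:ℕ) ≤ m := by omega
                push_cast [this]; ring
              rw [nsmul_eq_mul, this]
          _ ≤ ((m:ℝ) - 1) * ((2:ℝ) ^ (m - 2) * (2 / (1 - lam) *
                ({y ∈ extBoundaryG ι A ∩ rectG ι r | y i = k}.ncard : ℝ))) := by
              apply mul_le_mul_of_nonneg_left _ (by linarith)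
              apply mul_le_mul_of_nonneg_left _ (by positivity)
              rw [div_mul_eq_mul_div, le_div_iff₀ h1lam]
              nlinarith [hBklb]
          _ ≤ K * ({y ∈ extBoundaryG ι A ∩ rectG ι r | y i = k}.ncard : ℝ) := by
              have hpow : (2:ℝ) ^ (m - 2) * 2 = (2:ℝ) ^ (m - 1) := by
                rw [← pow_succ]
                congr 1
                omega
              have heq : ((m:ℝ) - 1) * ((2:ℝ) ^ (m - 2) * (2 / (1 - lam) *
                    ({y ∈ extBoundaryG ι A ∩ rectG ι r | y i = k}.ncard : ℝ)))
                  = (((m:ℝ) - 1) * ((2:ℝ) ^ (m - 2) * 2) / (1 - lam)) *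
                    ({y ∈ extBoundaryG ι A ∩ rectG ι r | y i = k}.ncard : ℝ) := by ring
              rw [heq, hpow, hK]
              nlinarith [hc', hBknn]
    -- sum the slab bounds
    calc ∑ j ∈ Finset.univ.erase i, ((projFaceG ι r j A).ncard : ℝ)
        = ∑ j ∈ Finset.univ.erase i, ∑ k ∈ Finset.Icc (1:ℤ) (r i),
            ({x ∈ projFaceG ι r j A | x i = k}.ncard : ℝ) := Finset.sum_congr rfl hfiber
      _ = ∑ k ∈ Finset.Icc (1:ℤ) (r i), ∑ j ∈ Finset.univ.erase i,
            ({x ∈ projFaceG ι r j A | x i = k}.ncard : ℝ) := Finset.sum_comm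
      _ ≤ ∑ k ∈ Finset.Icc (1:ℤ) (r i),
            K * ({y ∈ extBoundaryG ι A ∩ rectG ι r | y i = k}.ncard : ℝ) :=
          Finset.sum_le_sum hslab
      _ = K * ∑ k ∈ Finset.Icc (1:ℤ) (r i),
            ({y ∈ extBoundaryG ι A ∩ rectG ι r | y i = k}.ncard : ℝ) := by
          rw [Finset.mul_sum]
      _ = K * ((extBoundaryG ι A ∩ rectG ι r).ncard : ℝ) := by rw [hBfiber]
  -- assemble over all i
  set T : ℝ := ∑ q, ((projFaceG ι r q A).ncard : ℝ) with hT
  have hsum : ∀ i : ι, ∑ j ∈ Finset.univ.erase i, ((projFaceG ι r j A).ncard : ℝ)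
      = T - ((projFaceG ι r i A).ncard : ℝ) := fun i =>
    Finset.sum_erase_eq_sub (Finset.mem_univ i)
  have htot : ((m:ℝ) - 1) * T ≤ (m:ℝ) * (K * ((extBoundaryG ι A ∩ rectG ι r).ncard : ℝ)) := by
    have h := Finset.sum_le_sum (fun i (_ : i ∈ Finset.univ) => key i)
    rw [Finset.sum_congr rfl (fun i _ => hsum i)] at h
    rw [Finset.sum_sub_distrib, Finset.sum_const, Finset.card_univ, hcard] at h
    rw [Finset.sum_const, Finset.card_univ, hcard] at h
    have hmT : (m:ℝ) • T - T = ((m:ℝ) - 1) * T := by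
      rw [smul_eq_mul]; ring
    rw [nsmul_eq_mul, nsmul_eq_mul] at h
    nlinarith [h]
  have hm1pos : (0:ℝ) < (m:ℝ) - 1 := by linarith
  calc T ≤ (m:ℝ) * (K * ((extBoundaryG ι A ∩ rectG ι r).ncard : ℝ)) / ((m:ℝ) - 1) := by
        rw [le_div_iff₀ hm1pos]; nlinarith [htot]
    _ = (m:ℝ) * K * ((extBoundaryG ι A ∩ rectG ι r).ncard : ℝ) / ((m:ℝ) - 1) := by ring
    _ = (m:ℝ) * K / ((m:ℝ) - 1) * ((extBoundaryG ι A ∩ rectG ι r).ncard : ℝ) := by ring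

end Core
section Main

lemma cpos_helper (lam : ℝ) (hlam1 : lam < 1) (mm : ℕ) (c' : ℝ) (hmm : 2 ≤ mm) (hc' : 0 ≤ c') :
    0 < (mm : ℝ) * (c' + ((mm : ℝ) - 1) * 2 ^ (mm - 1) / (1 - lam)) / ((mm : ℝ) - 1) := by
  have hm2 : (2:ℝ) ≤ (mm:ℝ) := by exact_mod_cast hmm
  have h1lam : (0:ℝ) < 1 - lam := by linarith
  have hpow : (0:ℝ) < 2 ^ (mm - 1) := by positivity
  have h2 : (0:ℝ) < ((mm:ℝ) - 1) * 2 ^ (mm - 1) / (1 - lam) :=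
    div_pos (mul_pos (by linarith) hpow) h1lam
  apply div_pos (mul_pos (by linarith) (by linarith)) (by linarith)

theorem mainG (m : ℕ) (hm : 2 ≤ m) : ∀ lam : ℝ, 0 < lam → lam < 1 →
    ∃ c : ℝ, 0 < c ∧ ∀ (ι : Type) (_ : Fintype ι) (_ : DecidableEq ι),
      Fintype.card ι = m →
      ∀ R : ℕ, 2 ≤ R → ∀ r : ι → ℕ, (∀ q, R ≤ r q ∧ r q ≤ 2 * R) →
      ∀ A : Set (ι → ℤ),
      (∀ q, ((projFaceG ι r q A).ncard : ℝ) ≤ lam * ∏ p ∈ Finset.univ.erase q, (r p : ℝ)) →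
      (∑ q, ((projFaceG ι r q A).ncard : ℝ))
        ≤ c * ((extBoundaryG ι A ∩ rectG ι r).ncard : ℝ) := by
  induction m, hm using Nat.le_induction with
  | base =>
    intro lam hlam0 hlam1
    refine ⟨_, cpos_helper lam hlam1 2 0 le_rfl le_rfl, ?_⟩
    apply core_bound 2 le_rfl lam 0 hlam0 hlam1 le_rfl
    -- good slabs are trivial in dimension 2
    intro ι instF instD hcard R hR r hr A hA i k hk1 hk2 hgood
    have hzero : ∀ j ∈ Finset.univ.erase i,
        ({x ∈ projFaceG ι r j A | x i = k}.ncard : ℝ) = 0 := by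
      intro j hj
      have hempty : (Finset.univ.erase i).erase j = ∅ := by
        apply Finset.card_eq_zero.mp
        rw [Finset.card_erase_of_mem hj, Finset.card_erase_of_mem (Finset.mem_univ i),
          Finset.card_univ, hcard]
      have := hgood j hj
      rw [hempty, Finset.prod_empty, mul_one] at this
      have hlt : ({x ∈ projFaceG ι r j A | x i = k}.ncard : ℝ) < 1 := by
        have : (1 + lam) / 2 < 1 := by linarith
        linarith
      have hn0 : {x ∈ projFaceG ι r j A | x i = k}.ncard = 0 := by
        by_contra h
        have h1 : 1 ≤ {x ∈ projFaceG ι r j A | x i = k}.ncard := Nat.one_le_iff_ne_zero.mpr h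
        have h2 : (1:ℝ) ≤ ({x ∈ projFaceG ι r j A | x i = k}.ncard : ℝ) := by exact_mod_cast h1
        linarith
      rw [hn0]; norm_num
    have hsum0 : ∑ j ∈ Finset.univ.erase i,
        ({x ∈ projFaceG ι r j A | x i = k}.ncard : ℝ) = 0 := by
      rw [Finset.sum_congr rfl hzero]; simp
    rw [hsum0, zero_mul]
  | succ n hn ih =>
    intro lam hlam0 hlam1
    have hlam'0 : 0 < (1 + lam) / 2 := by linarith
    have hlam'1 : (1 + lam) / 2 < 1 := by linarith
    obtain ⟨c', hc'pos, Hc'⟩ := ih ((1 + lam) / 2) hlam'0 hlam'1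
    refine ⟨_, cpos_helper lam hlam1 (n + 1) c' (by omega) (le_of_lt hc'pos), ?_⟩
    apply core_bound (n + 1) (by omega) lam c' hlam0 hlam1 (le_of_lt hc'pos)
    intro ι instF instD hcard R hR r hr A hA i k hk1 hk2 hgood
    classical
    have hr1 : ∀ q, 1 ≤ r q := fun q => le_trans (by omega) (hr q).1
    have hcard' : Fintype.card {q : ι // q ≠ i} = n := by
      rw [card_ne_subtype, hcard]
      omega
    have hproj : ∀ q' : {q : ι // q ≠ i},
        (projFaceG {q : ι // q ≠ i} (fun q => r q.val) q' (extMap i k ⁻¹' A)).ncard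
          = {x ∈ projFaceG ι r q'.val A | x i = k}.ncard := by
      intro q'
      rw [← image_projFace (r := r) (A := A) i k hk1 hk2 q',
        Set.ncard_image_of_injective _ (extMap_injective i k)]
    have hA' : ∀ q' : {q : ι // q ≠ i},
        (((projFaceG {q : ι // q ≠ i} (fun q => r q.val) q' (extMap i k ⁻¹' A)).ncard : ℝ))
          ≤ (1 + lam) / 2 * ∏ p' ∈ Finset.univ.erase q', (((fun q : {q : ι // q ≠ i} => r q.val) p' : ℕ) : ℝ) := by
      intro q'
      rw [hproj q']
      have hpe := prod_subtype_erase i (fun p => (r p : ℝ)) q'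
        (Nat.cast_ne_zero.mpr (Nat.one_le_iff_ne_zero.mp (hr1 q'.val)))
      calc ({x ∈ projFaceG ι r q'.val A | x i = k}.ncard : ℝ)
          ≤ (1 + lam) / 2 * ∏ p ∈ (Finset.univ.erase i).erase q'.val, (r p : ℝ) :=
            hgood q'.val (Finset.mem_erase.mpr ⟨q'.2, Finset.mem_univ _⟩)
        _ = (1 + lam) / 2 * ∏ p' ∈ Finset.univ.erase q',
              (((fun q : {q : ι // q ≠ i} => r q.val) p' : ℕ) : ℝ) := by rw [← hpe]
    have hIH := Hc' {q : ι // q ≠ i} inferInstance inferInstance hcard' R hR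
      (fun q => r q.val) (fun q' => hr q'.val) (extMap i k ⁻¹' A) hA'
    have hBle : ((extBoundaryG {q : ι // q ≠ i} (extMap i k ⁻¹' A)
          ∩ rectG {q : ι // q ≠ i} (fun q => r q.val)).ncard : ℝ)
        ≤ ({y ∈ extBoundaryG ι A ∩ rectG ι r | y i = k}.ncard : ℝ) := by
      have hfin : {y ∈ extBoundaryG ι A ∩ rectG ι r | y i = k}.Finite :=
        (rectG_finite r).subset (fun y hy => hy.1.2)
      have := Set.ncard_le_ncard (image_boundary_subset (r := r) (A := A) i k hk1 hk2) hfin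
      rw [Set.ncard_image_of_injective _ (extMap_injective i k)] at this
      exact_mod_cast this
    calc ∑ j ∈ Finset.univ.erase i, ({x ∈ projFaceG ι r j A | x i = k}.ncard : ℝ)
        = ∑ q' : {q : ι // q ≠ i},
            ({x ∈ projFaceG ι r q'.val A | x i = k}.ncard : ℝ) :=
          (sum_subtype_ne i (fun j => ({x ∈ projFaceG ι r j A | x i = k}.ncard : ℝ))).symm
      _ = ∑ q' : {q : ι // q ≠ i},
            ((projFaceG {q : ι // q ≠ i} (fun q => r q.val) q' (extMap i k ⁻¹' A)).ncard : ℝ) := by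
          apply Finset.sum_congr rfl
          intro q' _
          rw [hproj q']
      _ ≤ c' * ((extBoundaryG {q : ι // q ≠ i} (extMap i k ⁻¹' A)
            ∩ rectG {q : ι // q ≠ i} (fun q => r q.val)).ncard : ℝ) := hIH
      _ ≤ c' * ({y ∈ extBoundaryG ι A ∩ rectG ι r | y i = k}.ncard : ℝ) :=
          mul_le_mul_of_nonneg_left hBle (le_of_lt hc'pos)

end Main

/-- Rectangular projection lemma: if all projections of `A ∩ R` have density at most
`λ < 1` on the corresponding faces, then the total size of the projections is bounded by
a constant (depending only on `d` and `λ`) times `|∂_ex A ∩ R|`. -/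
theorem stmt4 (d : ℕ) (hd : 2 ≤ d) (lam : ℝ) (hlam0 : 0 < lam) (hlam1 : lam < 1) :
    ∃ c : ℝ, 0 < c ∧
      ∀ (R : ℕ), 2 ≤ R →
      ∀ (r : Fin d → ℕ), (∀ i, R ≤ r i ∧ r i ≤ 2 * R) →
      ∀ (A : Set (Fin d → ℤ)),
        (∀ i, ((projFace d r i A).ncard : ℝ) ≤ lam * ∏ q ∈ Finset.univ.erase i, (r q : ℝ)) →
        (∑ i, ((projFace d r i A).ncard : ℝ)) ≤ c * ((extBoundary d A ∩ rect d r).ncard : ℝ) := by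
  obtain ⟨c, hc, H⟩ := mainG d hd lam hlam0 hlam1
  exact ⟨c, hc, fun R hR r hr A hA =>
    H (Fin d) inferInstance inferInstance (Fintype.card_fin d) R hR r hr A hA⟩
end

section
/- In the setting of the rectangular projection lemma, if x is a 'good point' of the projection P_i(A ∩ R) (meaning the line ℓ_x^i meets both A and R \ A), then the line ℓ_x^i contains a point of ∂_ex A ∩ R; consequently |P_i^G(A ∩ R)| ≤ |∂_ex A ∩ R|. -/
/-- The good points of the projection: the line over `x` also meets `R \ A`. -/
def projFaceGood (d : ℕ) (r : Fin d → ℕ) (i : Fin d) (A : Set (Fin d → ℤ)) :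
    Set (Fin d → ℤ) :=
  {x ∈ projFace d r i A | (lineSeg d r i x ∩ (rect d r \ A)).Nonempty}

lemma exists_transition (P : ℤ → Prop) :
    ∀ n : ℕ, ∀ a b : ℤ, (b - a).natAbs = n → P a → ¬ P b →
      ∃ t, ¬ P t ∧ (P (t - 1) ∨ P (t + 1)) ∧ min a b ≤ t ∧ t ≤ max a b := by
  intro n
  induction n with
  | zero =>
    intro a b h ha hb
    have : a = b := by omega
    exact absurd (this ▸ ha) hb
  | succ n ih =>
    intro a b h ha hb
    rcases lt_trichotomy a b with hab | hab | hab
    · by_cases hc : P (a + 1)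
      · obtain ⟨t, ht1, ht2, ht3, ht4⟩ := ih (a + 1) b (by omega) hc hb
        exact ⟨t, ht1, ht2, by omega, by omega⟩
      · exact ⟨a + 1, hc, Or.inl (by simpa using ha), by omega, by omega⟩
    · exact absurd (hab ▸ ha) hb
    · by_cases hc : P (a - 1)
      · obtain ⟨t, ht1, ht2, ht3, ht4⟩ := ih (a - 1) b (by omega) hc hb
        exact ⟨t, ht1, ht2, by omega, by omega⟩
      · exact ⟨a - 1, hc, Or.inr (by simpa using ha), by omega, by omega⟩

lemma update_l1 (d : ℕ) (i : Fin d) (x : Fin d → ℤ) (s t : ℤ) :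
    (∑ j, |Function.update x i s j - Function.update x i t j|) = |s - t| := by
  rw [Finset.sum_eq_single_of_mem i (Finset.mem_univ i)]
  · simp
  · intro j _ hj
    simp [Function.update_of_ne hj]
/-- Good points of the projection yield points of `∂_ex A ∩ R` on their lines;
consequently `|P_i^G(A ∩ R)| ≤ |∂_ex A ∩ R|`. -/
theorem stmt5 (d : ℕ) (hd : 1 ≤ d) (r : Fin d → ℕ) (i : Fin d) (A : Set (Fin d → ℤ)) :
    (∀ x ∈ projFaceGood d r i A,
      ∃ p ∈ lineSeg d r i x, p ∈ extBoundary d A ∩ rect d r) ∧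
    (projFaceGood d r i A).ncard ≤ (extBoundary d A ∩ rect d r).ncard := by
  have key : ∀ x ∈ projFaceGood d r i A,
      ∃ p ∈ lineSeg d r i x, p ∈ extBoundary d A ∩ rect d r := by
    rintro x ⟨⟨⟨hxR, hxi⟩, p, hpL, hpA⟩, q, hqL, hqR, hqA⟩
    set P : ℤ → Prop := fun t => Function.update x i t ∈ A with hP
    have hup : ∀ y ∈ lineSeg d r i x, Function.update x i (y i) = y := by
      intro y hy
      funext j
      rcases eq_or_ne j i with rfl | hj
      · simp
      · rw [Function.update_of_ne hj, hy.1 j hj]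
    have hPa : P (p i) := by rw [hP]; simpa [hup p hpL] using hpA
    have hPb : ¬ P (q i) := by rw [hP]; simpa [hup q hqL] using hqA
    obtain ⟨t, ht1, ht2, ht3, ht4⟩ :=
      exists_transition P ((q i) - (p i)).natAbs (p i) (q i) rfl hPa hPb
    have hti : 1 ≤ t ∧ t ≤ (r i : ℤ) := by
      have h1 := hpL.2.1; have h2 := hpL.2.2
      have h3 := hqL.2.1; have h4 := hqL.2.2
      omega
    refine ⟨Function.update x i t, ⟨?_, ?_, ?_⟩, ⟨ht1, ?_⟩, ?_⟩
    · intro j hj; exact Function.update_of_ne hj _ _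
    · simpa using hti.1
    · simpa using hti.2
    · rcases ht2 with h | h
      · exact ⟨Function.update x i (t - 1), h, by rw [update_l1]; simp⟩
      · exact ⟨Function.update x i (t + 1), h, by rw [update_l1]; simp⟩
    · intro j
      rcases eq_or_ne j i with rfl | hj
      · simpa using hti
      · rw [Function.update_of_ne hj]; exact hxR j
  refine ⟨key, ?_⟩
  classical
  have hrect : (rect d r).Finite := by
    have : rect d r ⊆ Set.pi Set.univ (fun j => Set.Icc (1 : ℤ) (r j)) := by
      intro x hx j _
      exact ⟨(hx j).1, (hx j).2⟩
    exact Set.Finite.subset (Set.Finite.pi (fun j => Set.finite_Icc _ _)) this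
  refine Set.ncard_le_ncard_of_injOn
    (fun x => if h : x ∈ projFaceGood d r i A then (key x h).choose else x) ?_ ?_
    ((hrect.subset Set.inter_subset_right))
  · intro x hx
    simp only [dif_pos hx]
    exact (key x hx).choose_spec.2
  · intro x hx y hy hxy
    simp only [dif_pos hx, dif_pos hy] at hxy
    have hx1 := (key x hx).choose_spec.1
    have hy1 := (key y hy).choose_spec.1
    funext j
    rcases eq_or_ne j i with rfl | hj
    · rw [hx.1.1.2, hy.1.1.2]
    · rw [← hx1.1 j hj, ← hy1.1 j hj, hxy]
end

section
/- Let d ≥ 2, A ⊂ ℤ^d, ℓ ≥ 0, and let C and C' be two axis-parallel cubes of side length 2^(rℓ) of the form C_{rℓ}(x) = ∏_{i}[2^{rℓ}x_i, 2^{rℓ}(x_i+1)) ∩ ℤ^d that share a face. Let U = C ∪ C'. If |C ∩ A| ≥ 2^(rℓd)/2 and |C' ∩ A| < 2^(rℓd)/2, then there exists a constant b depending only on d such that 2^(rℓ(d-1)) ≤ b·|∂_ex A ∩ U|. -/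
/-- The dyadic cube `C_m(x) = ∏_i [2^m x_i, 2^m(x_i+1)) ∩ ℤ^d`. -/
def dyadicCube (d m : ℕ) (x : Fin d → ℤ) : Set (Fin d → ℤ) :=
  {y | ∀ i, 2 ^ m * x i ≤ y i ∧ y i < 2 ^ m * (x i + 1)}

open Finset

/-- A discrete intermediate value theorem on `ℤ`. -/
lemma stmt6_ivt (P : ℤ → Prop) : ∀ (n : ℕ) (s t : ℤ), (t - s).natAbs = n → P s → ¬ P t →
    ∃ w, ¬ P w ∧ (P (w - 1) ∨ P (w + 1)) ∧ min s t ≤ w ∧ w ≤ max s t := by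
  intro n
  induction n with
  | zero =>
    intro s t h hs ht
    exact absurd ((show s = t by omega) ▸ hs) ht
  | succ n ih =>
    intro s t h hs ht
    rcases lt_trichotomy s t with hst | hst | hst
    · by_cases h1 : P (s + 1)
      · obtain ⟨w, hw1, hw2, hw3, hw4⟩ := ih (s + 1) t (by omega) h1 ht
        exact ⟨w, hw1, hw2, by omega, by omega⟩
      · exact ⟨s + 1, h1, Or.inl (by simpa using hs), by omega, by omega⟩
    · exact absurd (hst ▸ hs) ht
    · by_cases h1 : P (s - 1)
      · obtain ⟨w, hw1, hw2, hw3, hw4⟩ := ih (s - 1) t (by omega) h1 ht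
        exact ⟨w, hw1, hw2, by omega, by omega⟩
      · exact ⟨s - 1, h1, Or.inr (by simpa using hs), by omega, by omega⟩

/-- If among two face-adjacent cubes of side `2^m`, one is at least half filled by `A` and
the other is less than half filled, then the exterior boundary of `A` inside their union
has size at least `2^(m(d-1))/b`, for a constant `b` depending only on `d`. -/
theorem stmt6 (d : ℕ) (hd : 2 ≤ d) :
    ∃ b : ℕ, 0 < b ∧
      ∀ (m : ℕ) (A : Set (Fin d → ℤ)) (x y : Fin d → ℤ), (∑ i, |x i - y i|) = 1 →
        2 ^ (m * d) ≤ 2 * (dyadicCube d m x ∩ A).ncard →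
        2 * (dyadicCube d m y ∩ A).ncard < 2 ^ (m * d) →
        2 ^ (m * (d - 1)) ≤
          b * (extBoundary d A ∩ (dyadicCube d m x ∪ dyadicCube d m y)).ncard := by
  classical
  have hd0 : 0 < d := by omega
  refine ⟨16 * d, by omega, ?_⟩
  intro m A x y hxy hC hC'
  -- find the special coordinate j0
  have hxy' : ∑ i, (x i - y i).natAbs = 1 := by
    have h2 : ((∑ i, (x i - y i).natAbs : ℕ) : ℤ) = 1 := by
      push_cast
      simpa using hxy
    exact_mod_cast h2
  have hexj : ∃ j0 : Fin d, (x j0 - y j0).natAbs ≠ 0 := by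
    by_contra h
    push_neg at h
    rw [Finset.sum_eq_zero (fun i _ => h i)] at hxy'
    omega
  obtain ⟨j0, hj0ne⟩ := hexj
  have hsplit : (x j0 - y j0).natAbs + ∑ k ∈ univ.erase j0, (x k - y k).natAbs
      = ∑ i, (x i - y i).natAbs :=
    Finset.add_sum_erase _ (fun k => (x k - y k).natAbs) (mem_univ j0)
  have hj0abs : (x j0 - y j0).natAbs = 1 := by omega
  have hothers : ∀ i, i ≠ j0 → x i = y i := by
    intro i hi
    have h2 : (x i - y i).natAbs ≤ ∑ k ∈ univ.erase j0, (x k - y k).natAbs :=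
      Finset.single_le_sum (f := fun k => (x k - y k).natAbs)
        (fun _ _ => Nat.zero_le _) (Finset.mem_erase.mpr ⟨hi, mem_univ i⟩)
    omega
  -- the box and the two cubes as finsets
  set L : Fin d → ℤ := fun i => 2 ^ m * min (x i) (y i) with hL
  set U : Fin d → ℤ := fun i => 2 ^ m * (max (x i) (y i) + 1) with hU
  set B : Finset (Fin d → ℤ) := Fintype.piFinset (fun i => Finset.Ico (L i) (U i)) with hB
  set Cx : Finset (Fin d → ℤ) :=
    Fintype.piFinset (fun i => Finset.Ico (2 ^ m * x i) (2 ^ m * (x i + 1))) with hCx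
  set Cy : Finset (Fin d → ℤ) :=
    Fintype.piFinset (fun i => Finset.Ico (2 ^ m * y i) (2 ^ m * (y i + 1))) with hCy
  have hpow : ∀ k : ℕ, ((2 : ℤ) ^ k).toNat = 2 ^ k := by
    intro k
    rw [show ((2:ℤ)^k) = ((2^k : ℕ) : ℤ) by push_cast; ring, Int.toNat_natCast]
  have hmaxmin : max (x j0) (y j0) = min (x j0) (y j0) + 1 := by omega
  have hLx : ∀ i, i ≠ j0 → L i = 2 ^ m * x i := by
    intro i hi; simp [hL, hothers i hi]
  have hUx : ∀ i, i ≠ j0 → U i = 2 ^ m * (x i + 1) := by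
    intro i hi; simp [hU, hothers i hi]
  have hLy : ∀ i, i ≠ j0 → L i = 2 ^ m * y i := by
    intro i hi; simp [hL, hothers i hi]
  have hUy : ∀ i, i ≠ j0 → U i = 2 ^ m * (y i + 1) := by
    intro i hi; simp [hU, hothers i hi]
  have hLj0 : L j0 = 2 ^ m * min (x j0) (y j0) := by simp [hL]
  have hUj0 : U j0 = 2 ^ m * (min (x j0) (y j0) + 2) := by
    simp only [hU, hmaxmin]; ring
  have hmemB : ∀ z : Fin d → ℤ, z ∈ B ↔ ∀ i, L i ≤ z i ∧ z i < U i := by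
    intro z; rw [hB, Fintype.mem_piFinset]; simp only [mem_Ico]
  have hmemx : ∀ z : Fin d → ℤ, z ∈ Cx ↔ ∀ i, 2 ^ m * x i ≤ z i ∧ z i < 2 ^ m * (x i + 1) := by
    intro z; rw [hCx, Fintype.mem_piFinset]; simp only [mem_Ico]
  have hmemy : ∀ z : Fin d → ℤ, z ∈ Cy ↔ ∀ i, 2 ^ m * y i ≤ z i ∧ z i < 2 ^ m * (y i + 1) := by
    intro z; rw [hCy, Fintype.mem_piFinset]; simp only [mem_Ico]
  have hxle : ∀ z, z ∈ Cx → z ∈ B := by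
    intro z hz
    rw [hmemx] at hz
    rw [hmemB]
    intro i
    have h1 := hz i
    constructor
    · exact le_trans (mul_le_mul_of_nonneg_left (min_le_left _ _) (by positivity)) h1.1
    · exact lt_of_lt_of_le h1.2 (mul_le_mul_of_nonneg_left (by omega) (by positivity))
  have hyle : ∀ z, z ∈ Cy → z ∈ B := by
    intro z hz
    rw [hmemy] at hz
    rw [hmemB]
    intro i
    have h1 := hz i
    constructor
    · exact le_trans (mul_le_mul_of_nonneg_left (min_le_right _ _) (by positivity)) h1.1
    · exact lt_of_lt_of_le h1.2 (mul_le_mul_of_nonneg_left (by omega) (by positivity))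
  have hinx : ∀ z : Fin d → ℤ, (∀ i, L i ≤ z i ∧ z i < U i) →
      2 ^ m * x j0 ≤ z j0 → z j0 < 2 ^ m * (x j0 + 1) → z ∈ Cx := by
    intro z hz h1 h2
    rw [hmemx]
    intro i
    by_cases hij : i = j0
    · subst hij; exact ⟨h1, h2⟩
    · have h3 := hz i
      rw [hLx i hij, hUx i hij] at h3
      exact h3
  have hiny : ∀ z : Fin d → ℤ, (∀ i, L i ≤ z i ∧ z i < U i) →
      2 ^ m * y j0 ≤ z j0 → z j0 < 2 ^ m * (y j0 + 1) → z ∈ Cy := by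
    intro z hz h1 h2
    rw [hmemy]
    intro i
    by_cases hij : i = j0
    · subst hij; exact ⟨h1, h2⟩
    · have h3 := hz i
      rw [hLy i hij, hUy i hij] at h3
      exact h3
  have hBunion : B = Cx ∪ Cy := by
    ext z
    simp only [mem_union]
    constructor
    · intro hz
      rw [hmemB] at hz
      obtain ⟨hb1, hb2⟩ := hz j0
      rw [hLj0] at hb1
      rw [hUj0] at hb2
      by_cases hcase : z j0 < 2 ^ m * (min (x j0) (y j0) + 1)
      · rcases le_total (x j0) (y j0) with hc | hc
        · have hm : min (x j0) (y j0) = x j0 := min_eq_left hc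
          rw [hm] at hb1 hcase
          exact Or.inl (hinx z hz hb1 hcase)
        · have hm : min (x j0) (y j0) = y j0 := min_eq_right hc
          rw [hm] at hb1 hcase
          exact Or.inr (hiny z hz hb1 hcase)
      · push_neg at hcase
        rcases le_total (x j0) (y j0) with hc | hc
        · have hm : y j0 = min (x j0) (y j0) + 1 := by omega
          refine Or.inr (hiny z hz ?_ ?_)
          · rw [hm]; exact hcase
          · rw [hm, show min (x j0) (y j0) + 1 + 1 = min (x j0) (y j0) + 2 by ring]
            exact hb2
        · have hm : x j0 = min (x j0) (y j0) + 1 := by omega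
          refine Or.inl (hinx z hz ?_ ?_)
          · rw [hm]; exact hcase
          · rw [hm, show min (x j0) (y j0) + 1 + 1 = min (x j0) (y j0) + 2 by ring]
            exact hb2
    · rintro (hz | hz)
      · exact hxle z hz
      · exact hyle z hz
  have hdisj : Disjoint Cx Cy := by
    rw [Finset.disjoint_left]
    intro z hzx hzy
    rw [hmemx] at hzx
    rw [hmemy] at hzy
    have h1 := hzx j0
    have h2 := hzy j0
    rcases Int.natAbs_eq_iff.mp hj0abs with h | h
    · have hx' : x j0 = y j0 + 1 := by omega
      rw [hx'] at h1
      linarith [h1.1, h2.2]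
    · have hy' : y j0 = x j0 + 1 := by omega
      rw [hy'] at h2
      linarith [h1.2, h2.1]
  have hCxcard : Cx.card = 2 ^ (m * d) := by
    rw [hCx, Fintype.card_piFinset]
    have h1 : ∀ i : Fin d, (Finset.Ico (2 ^ m * x i) (2 ^ m * (x i + 1))).card = 2 ^ m := by
      intro i
      rw [Int.card_Ico, show (2:ℤ)^m * (x i + 1) - 2^m * x i = 2^m by ring, hpow]
    rw [Finset.prod_congr rfl (fun i _ => h1 i), Finset.prod_const, card_univ,
      Fintype.card_fin, ← pow_mul]
  have hCycard : Cy.card = 2 ^ (m * d) := by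
    rw [hCy, Fintype.card_piFinset]
    have h1 : ∀ i : Fin d, (Finset.Ico (2 ^ m * y i) (2 ^ m * (y i + 1))).card = 2 ^ m := by
      intro i
      rw [Int.card_Ico, show (2:ℤ)^m * (y i + 1) - 2^m * y i = 2^m by ring, hpow]
    rw [Finset.prod_congr rfl (fun i _ => h1 i), Finset.prod_const, card_univ,
      Fintype.card_fin, ← pow_mul]
  have hBcard : B.card = 2 * 2 ^ (m * d) := by
    rw [hB, Fintype.card_piFinset]
    rw [← Finset.mul_prod_erase univ _ (mem_univ j0)]
    have h1 : (Finset.Ico (L j0) (U j0)).card = 2 * 2 ^ m := by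
      rw [Int.card_Ico, hLj0, hUj0,
        show (2:ℤ)^m * (min (x j0) (y j0) + 2) - 2^m * min (x j0) (y j0) = 2 * 2^m by ring]
      rw [show (2 : ℤ) * 2^m = ((2 * 2^m : ℕ) : ℤ) by push_cast; ring, Int.toNat_natCast]
    have h2 : ∀ i ∈ univ.erase j0, (Finset.Ico (L i) (U i)).card = 2 ^ m := by
      intro i hi
      have hij : i ≠ j0 := (Finset.mem_erase.mp hi).1
      rw [Int.card_Ico, hLx i hij, hUx i hij,
        show (2:ℤ)^m * (x i + 1) - 2^m * x i = 2^m by ring, hpow]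
    rw [h1, Finset.prod_congr rfl h2, Finset.prod_const, Finset.card_erase_of_mem (mem_univ j0),
      card_univ, Fintype.card_fin]
    have h3 : m * d = m + m * (d - 1) := by
      cases d with
      | zero => omega
      | succ e => simp [Nat.mul_succ, Nat.succ_sub_one]; ring
    rw [h3, pow_add]
    ring
  have hwidth : ∀ i, U i ≤ L i + 2 ^ (m + 1) := by
    intro i
    by_cases hij : i = j0
    · subst hij
      rw [hLj0, hUj0, pow_succ]
      nlinarith [pow_pos (show (0:ℤ) < 2 by norm_num) m]
    · rw [hLx i hij, hUx i hij, pow_succ]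
      nlinarith [pow_pos (show (0:ℤ) < 2 by norm_num) m]
  -- the parts of A and its complement inside the box, and the boundary inside the box
  set S : Finset (Fin d → ℤ) := B.filter (· ∈ A) with hSdef
  set T : Finset (Fin d → ℤ) := B.filter (· ∉ A) with hTdef
  set DB : Finset (Fin d → ℤ) := B.filter (· ∈ extBoundary d A) with hDBdef
  have hmemDB : ∀ z, z ∈ DB ↔ z ∈ B ∧ z ∈ extBoundary d A := by
    intro z; rw [hDBdef, mem_filter]
  have hSB : ∀ a ∈ S, a ∈ B := fun a ha => (mem_filter.mp ha).1
  have hTB : ∀ b ∈ T, b ∈ B := fun b hb => (mem_filter.mp hb).1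
  -- the key lemma: a boundary witness for each pair
  have key : ∀ a b : Fin d → ℤ, a ∈ S → b ∈ T →
      ∃ jw : Fin d × (Fin d → ℤ), jw.2 ∈ DB ∧
        (∀ i, jw.1 < i → jw.2 i = a i) ∧ (∀ i, i < jw.1 → jw.2 i = b i) := by
    intro a b haS hbT
    have haB : a ∈ B := hSB a haS
    have hbB : b ∈ B := hTB b hbT
    have haA : a ∈ A := (mem_filter.mp haS).2
    have hbA : b ∉ A := (mem_filter.mp hbT).2
    set p : ℕ → Fin d → ℤ := fun k i => if (i : ℕ) < k then b i else a i with hp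
    have hp0 : p 0 = a := funext fun i => by simp [hp]
    have hpdb : p d = b := funext fun i => by simp [hp, i.isLt]
    have hex : ∃ k, p k ∉ A := ⟨d, hpdb ▸ hbA⟩
    set k0 := Nat.find hex with hk0def
    have hk0 : p k0 ∉ A := Nat.find_spec hex
    have hk0d : k0 ≤ d := Nat.find_le (hpdb ▸ hbA)
    have hk0pos : 0 < k0 := by
      rcases Nat.eq_zero_or_pos k0 with h | h
      · exact absurd (hp0 ▸ (h ▸ hk0)) (by simpa using haA)
      · exact h
    have hprev : p (k0 - 1) ∈ A := by
      by_contra h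
      exact Nat.find_min hex (show k0 - 1 < k0 by omega) h
    set j : Fin d := ⟨k0 - 1, by omega⟩ with hj
    have hpja : p (k0 - 1) j = a j := by simp [hp]; intro h; exact absurd h (lt_irrefl _)
    have hupdb : p k0 = Function.update (p (k0 - 1)) j (b j) := by
      funext i
      by_cases hij : i = j
      · subst hij
        rw [Function.update_self]
        simp only [hp]
        rw [if_pos (by show k0 - 1 < k0; omega)]
      · rw [Function.update_of_ne hij]
        have hne : (i : ℕ) ≠ k0 - 1 := fun h => hij (Fin.ext h)
        simp only [hp]
        by_cases h2 : (i : ℕ) < k0 - 1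
        · rw [if_pos (by omega), if_pos h2]
        · rw [if_neg (by omega), if_neg h2]
    set P : ℤ → Prop := fun t => Function.update (p (k0 - 1)) j t ∈ A with hP
    have hPs : P (a j) := by
      show Function.update (p (k0 - 1)) j (a j) ∈ A
      rw [← hpja, Function.update_eq_self]
      exact hprev
    have hPt : ¬ P (b j) := by
      show Function.update (p (k0 - 1)) j (b j) ∉ A
      rw [← hupdb]
      exact hk0
    obtain ⟨t, hT1, hT2, hT3, hT4⟩ := stmt6_ivt P _ (a j) (b j) rfl hPs hPt
    set w : Fin d → ℤ := Function.update (p (k0 - 1)) j t with hw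
    have hwi : ∀ i, i ≠ j → w i = p (k0 - 1) i := fun i hi => Function.update_of_ne hi _ _
    have hwB : w ∈ B := by
      rw [hmemB]
      intro i
      by_cases hij : i = j
      · subst hij
        rw [hw, Function.update_self]
        have h1 := (hmemB a).mp haB j
        have h2 := (hmemB b).mp hbB j
        constructor
        · rcases le_total (a j) (b j) with h | h
          · calc L j ≤ a j := h1.1
              _ = min (a j) (b j) := (min_eq_left h).symm
              _ ≤ t := hT3
          · calc L j ≤ b j := h2.1
              _ = min (a j) (b j) := (min_eq_right h).symm
              _ ≤ t := hT3
        · rcases le_total (a j) (b j) with h | h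
          · calc t ≤ max (a j) (b j) := hT4
              _ = b j := max_eq_right h
              _ < U j := h2.2
          · calc t ≤ max (a j) (b j) := hT4
              _ = a j := max_eq_left h
              _ < U j := h1.2
      · rw [hwi i hij]
        simp only [hp]
        by_cases h2 : (i : ℕ) < k0 - 1
        · rw [if_pos h2]; exact (hmemB b).mp hbB i
        · rw [if_neg h2]; exact (hmemB a).mp haB i
    have hwext : w ∈ extBoundary d A := by
      refine ⟨hT1, ?_⟩
      rcases hT2 with hz | hz
      · refine ⟨Function.update (p (k0 - 1)) j (t - 1), hz, ?_⟩
        rw [Fintype.sum_eq_single j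
          (fun i hij => by rw [hwi i hij, Function.update_of_ne hij]; simp)]
        rw [hw, Function.update_self, Function.update_self]
        rw [show t - 1 - t = (-1 : ℤ) by ring]
        norm_num
      · refine ⟨Function.update (p (k0 - 1)) j (t + 1), hz, ?_⟩
        rw [Fintype.sum_eq_single j
          (fun i hij => by rw [hwi i hij, Function.update_of_ne hij]; simp)]
        rw [hw, Function.update_self, Function.update_self]
        rw [show t + 1 - t = (1 : ℤ) by ring]
        norm_num
    refine ⟨(j, w), ?_, ?_, ?_⟩
    · rw [hmemDB]; exact ⟨hwB, hwext⟩
    · intro i hi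
      have hij : i ≠ j := Fin.ne_of_gt hi
      show w i = a i
      rw [hwi i hij]
      simp only [hp]
      have hi' : k0 - 1 < (i : ℕ) := hi
      rw [if_neg (by omega)]
    · intro i hi
      have hij : i ≠ j := Fin.ne_of_lt hi
      show w i = b i
      rw [hwi i hij]
      simp only [hp]
      have hi' : (i : ℕ) < k0 - 1 := hi
      rw [if_pos hi']
  -- the double counting via an injection
  have hcount : S.card * T.card ≤ (d * DB.card) * (B.card * 2 ^ (m + 1)) := by
    set W : Finset ((Fin d × (Fin d → ℤ)) × ((Fin d → ℤ) × ℤ)) :=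
      ((univ : Finset (Fin d)) ×ˢ DB) ×ˢ (B ×ˢ Finset.Ico (0 : ℤ) (2 ^ (m + 1))) with hW
    set F : ((Fin d → ℤ) × (Fin d → ℤ)) → ((Fin d × (Fin d → ℤ)) × ((Fin d → ℤ) × ℤ)) :=
      fun ab =>
        if h : ab.1 ∈ S ∧ ab.2 ∈ T then
          ((key ab.1 ab.2 h.1 h.2).choose,
            ((fun i => if i ≤ (key ab.1 ab.2 h.1 h.2).choose.1 then ab.1 i else ab.2 i),
              ab.2 (key ab.1 ab.2 h.1 h.2).choose.1 - L (key ab.1 ab.2 h.1 h.2).choose.1))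
        else ((⟨0, hd0⟩, ab.1), (ab.1, 0)) with hF
    have hmaps : ∀ ab ∈ S ×ˢ T, F ab ∈ W := by
      intro ab hab
      rw [mem_product] at hab
      have hcond : ab.1 ∈ S ∧ ab.2 ∈ T := hab
      rw [hF]
      dsimp only
      rw [dif_pos hcond]
      obtain ⟨hjw1, hjw2, hjw3⟩ := (key ab.1 ab.2 hcond.1 hcond.2).choose_spec
      rw [hW, mem_product, mem_product, mem_product]
      refine ⟨⟨mem_univ _, hjw1⟩, ?_, ?_⟩
      · rw [hmemB]
        intro i
        dsimp only
        split_ifs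
        · exact (hmemB ab.1).mp (hSB ab.1 hcond.1) i
        · exact (hmemB ab.2).mp (hTB ab.2 hcond.2) i
      · set jj := (key ab.1 ab.2 hcond.1 hcond.2).choose.1
        have h1 := (hmemB ab.2).mp (hTB ab.2 hcond.2) jj
        have h2 := hwidth jj
        rw [mem_Ico]
        constructor <;> dsimp only <;> linarith [h1.1, h1.2]
    have hinj : Set.InjOn F ↑(S ×ˢ T) := by
      intro ab hab ab' hab' heq
      rw [Finset.mem_coe, Finset.mem_product] at hab hab'
      have hcond : ab.1 ∈ S ∧ ab.2 ∈ T := hab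
      have hcond' : ab'.1 ∈ S ∧ ab'.2 ∈ T := hab'
      rw [hF] at heq
      dsimp only at heq
      rw [dif_pos hcond, dif_pos hcond'] at heq
      obtain ⟨hjw1, hjw2, hjw3⟩ := (key ab.1 ab.2 hcond.1 hcond.2).choose_spec
      obtain ⟨hjw1', hjw2', hjw3'⟩ := (key ab'.1 ab'.2 hcond'.1 hcond'.2).choose_spec
      set jw := (key ab.1 ab.2 hcond.1 hcond.2).choose with hjwdef
      set jw' := (key ab'.1 ab'.2 hcond'.1 hcond'.2).choose with hjwdef'
      simp only [Prod.ext_iff] at heq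
      obtain ⟨⟨hjeq, hwq⟩, hceq, heeq⟩ := heq
      have ha : ab.1 = ab'.1 := by
        funext i
        rcases le_or_gt i jw.1 with hle | hlt
        · have h5 := congrFun hceq i
          rw [if_pos hle, if_pos (hjeq ▸ hle)] at h5
          exact h5
        · rw [← hjw2 i hlt, hwq, hjw2' i (hjeq ▸ hlt)]
      have hb : ab.2 = ab'.2 := by
        funext i
        rcases lt_trichotomy i jw.1 with hlt | heqi | hgt
        · rw [← hjw3 i hlt, hwq, hjw3' i (hjeq ▸ hlt)]
        · subst heqi
          rw [← hjeq] at heeq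
          omega
        · have h5 := congrFun hceq i
          rw [if_neg (not_le.mpr hgt), if_neg (not_le.mpr (hjeq ▸ hgt))] at h5
          exact h5
      exact Prod.ext ha hb
    have hcard := Finset.card_le_card_of_injOn F hmaps hinj
    rw [Finset.card_product] at hcard
    rw [hW, Finset.card_product, Finset.card_product, Finset.card_product, card_univ,
      Fintype.card_fin, Int.card_Ico] at hcard
    have h6 : ((2 : ℤ) ^ (m + 1) - 0).toNat = 2 ^ (m + 1) := by
      rw [sub_zero, show ((2:ℤ)^(m+1)) = ((2^(m+1) : ℕ) : ℤ) by push_cast; ring,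
        Int.toNat_natCast]
    rw [h6] at hcard
    exact hcard
  -- translate the hypotheses on ncard to the finset cards
  have hxset : dyadicCube d m x ∩ A = ↑(Cx.filter (· ∈ A)) := by
    ext z
    simp only [Set.mem_inter_iff, Finset.coe_filter, Set.mem_setOf_eq, hmemx, dyadicCube]
  have hyset : dyadicCube d m y ∩ A = ↑(Cy.filter (· ∈ A)) := by
    ext z
    simp only [Set.mem_inter_iff, Finset.coe_filter, Set.mem_setOf_eq, hmemy, dyadicCube]
  have hxset0 : dyadicCube d m x = ↑Cx := by
    ext z
    simp only [Finset.mem_coe, hmemx, dyadicCube, Set.mem_setOf_eq]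
  have hyset0 : dyadicCube d m y = ↑Cy := by
    ext z
    simp only [Finset.mem_coe, hmemy, dyadicCube, Set.mem_setOf_eq]
  have hDBset : extBoundary d A ∩ (dyadicCube d m x ∪ dyadicCube d m y) = ↑DB := by
    ext z
    simp only [Set.mem_inter_iff, Set.mem_union, hxset0, hyset0, Finset.mem_coe, hmemDB,
      hBunion, Finset.mem_union]
    tauto
  rw [hxset, Set.ncard_coe_finset] at hC
  rw [hyset, Set.ncard_coe_finset] at hC'
  rw [hDBset, Set.ncard_coe_finset]
  -- cardinality bookkeeping
  have hSsplit : S.card = (Cx.filter (· ∈ A)).card + (Cy.filter (· ∈ A)).card := by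
    rw [hSdef, hBunion, filter_union,
      card_union_of_disjoint (disjoint_filter_filter hdisj)]
  have hST : S.card + T.card = B.card := by
    rw [hSdef, hTdef]
    exact Finset.card_filter_add_card_filter_not (fun z => z ∈ A)
  have hsxle : (Cx.filter (· ∈ A)).card ≤ 2 ^ (m * d) :=
    le_trans (Finset.card_filter_le _ _) (le_of_eq hCxcard)
  have hS2 : 2 ^ (m * d) ≤ 2 * S.card := by omega
  have hT2 : 2 ^ (m * d) ≤ 2 * T.card := by
    obtain ⟨nn, hnn⟩ : ∃ nn, nn = 2 ^ (m * d) := ⟨_, rfl⟩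
    rw [← hnn] at hC hC' hsxle hBcard ⊢
    omega
  -- the final arithmetic
  have hqd : 2 ^ (m * d) = 2 ^ (m * (d - 1)) * 2 ^ m := by
    rw [← pow_add]
    congr 1
    cases d with
    | zero => omega
    | succ e => simp [Nat.mul_succ, Nat.succ_sub_one]
  have hX : 0 < 2 ^ (m * (d - 1)) * 2 ^ m * 2 ^ m := by positivity
  have hfinal : 2 ^ (m * (d - 1)) * (2 ^ (m * (d - 1)) * 2 ^ m * 2 ^ m) ≤
      (16 * d * DB.card) * (2 ^ (m * (d - 1)) * 2 ^ m * 2 ^ m) := by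
    calc 2 ^ (m * (d - 1)) * (2 ^ (m * (d - 1)) * 2 ^ m * 2 ^ m)
        = 2 ^ (m * d) * 2 ^ (m * d) := by rw [hqd]; ring
      _ ≤ (2 * S.card) * (2 * T.card) := Nat.mul_le_mul hS2 hT2
      _ = 4 * (S.card * T.card) := by ring
      _ ≤ 4 * ((d * DB.card) * (B.card * 2 ^ (m + 1))) := Nat.mul_le_mul_left 4 hcount
      _ = (16 * d * DB.card) * (2 ^ (m * (d - 1)) * 2 ^ m * 2 ^ m) := by
          rw [hBcard, hqd, pow_succ]; ring
  exact Nat.le_of_mul_le_mul_right hfinal hX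
end

section
/- Suppose (X_t)_{t∈T} is a finite family of centered real random variables on a probability space, and d is a metric on T such that P(|X_t - X_s| ≥ λ) ≤ 2·exp(-λ²/(2 d(s,t)²)) for all s,t ∈ T and λ > 0. If T is covered by N balls of radius ε (in the metric d), and sup over each ball of the increments is controlled, then E[sup_{t∈T} X_t] ≤ L̄ · ∫_0^∞ √(log N(T,d,ε)) dε for a universal constant L̄, where N(T,d,ε) is the minimal number of d-balls of radius ε needed to cover T (Dudley's entropy bound). -/
open MeasureTheory

/-- The minimal number of balls of radius `ε` needed to cover `T`. -/
noncomputable def coveringNumber (T : Type*) [MetricSpace T] (ε : ℝ) : ℕ :=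
  sInf {k : ℕ | ∃ S : Finset T, S.card ≤ k ∧ ∀ t : T, ∃ s ∈ S, dist t s ≤ ε}

open Set Real

section Aux
variable {T : Type*} [MetricSpace T]

lemma covSet_nonempty [Fintype T] {ε : ℝ} (hε : 0 ≤ ε) :
    {k : ℕ | ∃ S : Finset T, S.card ≤ k ∧ ∀ t : T, ∃ s ∈ S, dist t s ≤ ε}.Nonempty :=
  ⟨Fintype.card T, Finset.univ, le_rfl, fun t => ⟨t, Finset.mem_univ t, by simp [hε]⟩⟩

lemma coveringNumber_le_card [Fintype T] {ε : ℝ} (hε : 0 ≤ ε) :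
    coveringNumber T ε ≤ Fintype.card T :=
  Nat.sInf_le ⟨Finset.univ, le_rfl, fun t => ⟨t, Finset.mem_univ t, by simp [hε]⟩⟩

lemma exists_min_cover [Fintype T] {ε : ℝ} (hε : 0 ≤ ε) :
    ∃ S : Finset T, S.card ≤ coveringNumber T ε ∧ ∀ t : T, ∃ s ∈ S, dist t s ≤ ε :=
  Nat.sInf_mem (covSet_nonempty hε)

lemma one_le_coveringNumber [Fintype T] [Nonempty T] {ε : ℝ} (hε : 0 ≤ ε) :
    1 ≤ coveringNumber T ε := by
  obtain ⟨S, hS, hcov⟩ := exists_min_cover (T := T) hε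
  obtain ⟨s, hs, -⟩ := hcov (Classical.arbitrary T)
  have : 1 ≤ S.card := Finset.card_pos.mpr ⟨s, hs⟩
  omega

lemma antitone_coveringNumber [Fintype T] {ε ε' : ℝ} (hε : 0 ≤ ε) (h : ε ≤ ε') :
    coveringNumber T ε' ≤ coveringNumber T ε := by
  obtain ⟨S, hS, hcov⟩ := exists_min_cover (T := T) hε
  exact le_trans (Nat.sInf_le ⟨S, le_rfl, fun t => by
    obtain ⟨s, hs, hd⟩ := hcov t; exact ⟨s, hs, hd.trans h⟩⟩) hS

lemma coveringNumber_eq_one [Fintype T] {ε : ℝ} (t₁ : T) (h : ∀ t : T, dist t t₁ ≤ ε) :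
    coveringNumber T ε = 1 := by
  have h1 : coveringNumber T ε ≤ 1 :=
    Nat.sInf_le ⟨{t₁}, by simp, fun t => ⟨t₁, Finset.mem_singleton_self t₁, h t⟩⟩
  have h2 : 1 ≤ coveringNumber T ε := by
    haveI : Nonempty T := ⟨t₁⟩
    exact one_le_coveringNumber (le_trans dist_nonneg (h t₁))
  omega

lemma two_le_coveringNumber [Fintype T] {ε : ℝ} (hε : 0 ≤ ε) {t₁ t₂ : T}
    (h : 2 * ε < dist t₁ t₂) :
    2 ≤ coveringNumber T ε := by
  refine le_csInf (covSet_nonempty hε) ?_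
  · rintro k ⟨S, hS, hcov⟩
    by_contra hk
    push_neg at hk
    interval_cases k
    · obtain ⟨s, hs, -⟩ := hcov t₁
      simp [Finset.card_eq_zero.mp (Nat.le_zero.mp hS)] at hs
    · obtain ⟨s, hs, hd⟩ := hcov t₁
      obtain ⟨s', hs', hd'⟩ := hcov t₂
      have : s = s' := Finset.card_le_one.mp hS s hs s' hs'
      subst this
      have := dist_triangle t₁ s t₂
      rw [dist_comm s t₂] at this
      linarith

lemma sqrt_add_le_add_sqrt {a b : ℝ} (ha : 0 ≤ a) (hb : 0 ≤ b) :
    Real.sqrt (a + b) ≤ Real.sqrt a + Real.sqrt b := by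
  rw [show a + b = Real.sqrt a ^ 2 + Real.sqrt b ^ 2 by rw [Real.sq_sqrt ha, Real.sq_sqrt hb]]
  nlinarith [Real.sqrt_nonneg a, Real.sqrt_nonneg b,
    Real.sqrt_nonneg (Real.sqrt a ^ 2 + Real.sqrt b ^ 2),
    Real.sq_sqrt (by positivity : (0:ℝ) ≤ Real.sqrt a ^ 2 + Real.sqrt b ^ 2)]

lemma integrable_finset_sup' {Ω : Type*} [MeasurableSpace Ω] {P : Measure Ω}
    {ι : Type*} (s : Finset ι) (hs : s.Nonempty) (f : ι → Ω → ℝ)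
    (hf : ∀ i ∈ s, Integrable (f i) P) :
    Integrable (fun ω => s.sup' hs (fun i => f i ω)) P := by
  induction hs using Finset.Nonempty.cons_induction with
  | singleton a => simpa using hf a (by simp)
  | cons a t hat ht ih =>
      simp only [Finset.sup'_cons ht]
      exact ((hf a (by simp)).sup (ih (fun i hi => hf i (Finset.mem_cons_of_mem hi))))

lemma integral_exp_neg_mul_Ioi {c : ℝ} (hc : 0 < c) (a : ℝ) :
    ∫ t in Ioi a, Real.exp (-(c * t)) = c⁻¹ * Real.exp (-(c * a)) := by
  have h := MeasureTheory.integral_comp_mul_left_Ioi (fun x => Real.exp (-x)) a hc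
  simp only [smul_eq_mul] at h
  rw [h, integral_exp_neg_Ioi]
lemma expect_max_le {Ω : Type*} [MeasurableSpace Ω] (P : Measure Ω) [IsProbabilityMeasure P]
    {ι : Type*} (s : Finset ι) (hs : s.Nonempty) (Y : ι → Ω → ℝ)
    (hint : ∀ i ∈ s, Integrable (Y i) P) {σ : ℝ} (hσ : 0 < σ)
    (htail : ∀ i ∈ s, ∀ lam : ℝ, 0 < lam →
      P {ω | lam ≤ |Y i ω|} ≤ ENNReal.ofReal (2 * Real.exp (-lam ^ 2 / (2 * σ ^ 2)))) :
    ∫ ω, s.sup' hs (fun i => |Y i ω|) ∂P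
      ≤ σ * (Real.sqrt (2 * Real.log (2 * s.card)) + 4) := by
  have hm : 1 ≤ (s.card : ℝ) := by exact_mod_cast Finset.card_pos.mpr hs
  set m : ℝ := (s.card : ℝ) with hm_def
  have h2m : (2:ℝ) ≤ 2 * m := by linarith
  have hlog2 : Real.log 2 ≤ Real.log (2 * m) := Real.log_le_log (by norm_num) h2m
  have hlogpos : 0 < 2 * Real.log (2 * m) := by
    have := Real.log_two_gt_d9; linarith
  set a : ℝ := σ * Real.sqrt (2 * Real.log (2 * m)) with ha_def
  have hsq : Real.sqrt (2 * Real.log (2 * m)) ^ 2 = 2 * Real.log (2 * m) :=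
    Real.sq_sqrt hlogpos.le
  have hsqrt1 : 1 ≤ Real.sqrt (2 * Real.log (2 * m)) := by
    rw [show (1:ℝ) = Real.sqrt 1 by simp]
    exact Real.sqrt_le_sqrt (by have := Real.log_two_gt_d9; linarith)
  have ha : 0 < a := by positivity
  set c : ℝ := a / (2 * σ ^ 2) with hc_def
  have hc : 0 < c := by positivity
  set f : Ω → ℝ := fun ω => s.sup' hs (fun i => |Y i ω|) with hf_def
  have hf_nn : ∀ ω, 0 ≤ f ω := by
    intro ω
    obtain ⟨i, hi⟩ := hs
    exact le_trans (abs_nonneg (Y i ω)) (Finset.le_sup' (fun j => |Y j ω|) hi)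
  have hf_int : Integrable f P :=
    integrable_finset_sup' s hs _ (fun i hi => (hint i hi).abs)
  have key : ∫ ω, f ω ∂P = (∫⁻ t in Ioi (0:ℝ), P {ω | t < f ω}).toReal := by
    rw [integral_eq_lintegral_of_nonneg_ae (Filter.Eventually.of_forall hf_nn)
      hf_int.aestronglyMeasurable,
      lintegral_eq_lintegral_meas_lt P (Filter.Eventually.of_forall hf_nn)
        hf_int.aemeasurable]
  have tail_bound : ∀ t : ℝ, a < t →
      P {ω | t < f ω} ≤ ENNReal.ofReal (2 * m * Real.exp (-(c * t))) := by
    intro t hat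
    have ht : 0 < t := lt_trans ha hat
    have hsub : {ω | t < f ω} ⊆ ⋃ i ∈ s, {ω | t ≤ |Y i ω|} := by
      intro ω hω
      obtain ⟨i, hi, hieq⟩ := Finset.exists_mem_eq_sup' hs (fun j => |Y j ω|)
      refine Set.mem_biUnion hi ?_
      simp only [Set.mem_setOf_eq] at hω ⊢
      have : t < s.sup' hs (fun j => |Y j ω|) := hω
      rw [hieq] at this
      exact this.le
    calc P {ω | t < f ω} ≤ ∑ i ∈ s, P {ω | t ≤ |Y i ω|} :=
            le_trans (measure_mono hsub) (measure_biUnion_finset_le _ _)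
      _ ≤ ∑ _i ∈ s, ENNReal.ofReal (2 * Real.exp (-(c * t))) := by
            apply Finset.sum_le_sum
            intro i hi
            refine le_trans (htail i hi t ht) (ENNReal.ofReal_le_ofReal ?_)
            have h1 : a * t ≤ t ^ 2 := by nlinarith
            have hexp : -t ^ 2 / (2 * σ ^ 2) ≤ -(c * t) := by
              rw [hc_def, div_mul_eq_mul_div, neg_div]
              apply neg_le_neg
              gcongr
            have := Real.exp_le_exp.mpr hexp
            linarith [Real.exp_pos (-(c*t))]
      _ = ENNReal.ofReal (2 * m * Real.exp (-(c * t))) := by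
            rw [Finset.sum_const, nsmul_eq_mul, ← ENNReal.ofReal_natCast s.card,
              ← ENNReal.ofReal_mul (Nat.cast_nonneg _)]
            congr 1
            rw [hm_def]; ring
  have split : (∫⁻ t in Ioi (0:ℝ), P {ω | t < f ω})
      = (∫⁻ t in Ioc (0:ℝ) a, P {ω | t < f ω}) + (∫⁻ t in Ioi a, P {ω | t < f ω}) := by
    rw [← lintegral_union measurableSet_Ioi Set.Ioc_disjoint_Ioi_same,
      Set.Ioc_union_Ioi_eq_Ioi ha.le]
  have part1 : (∫⁻ t in Ioc (0:ℝ) a, P {ω | t < f ω}) ≤ ENNReal.ofReal a := by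
    calc (∫⁻ t in Ioc (0:ℝ) a, P {ω | t < f ω}) ≤ ∫⁻ _ in Ioc (0:ℝ) a, 1 :=
          lintegral_mono (fun t => prob_le_one)
      _ = ENNReal.ofReal a := by rw [setLIntegral_one, Real.volume_Ioc, sub_zero]
  have hIntExp : IntegrableOn (fun t => 2 * m * Real.exp (-(c * t))) (Ioi a) := by
    have := (exp_neg_integrableOn_Ioi a hc).const_mul (2 * m)
    simpa [neg_mul, IntegrableOn] using this
  have hmblExp : Measurable fun t : ℝ => ENNReal.ofReal (2 * m * Real.exp (-(c * t))) := by
    apply Measurable.ennreal_ofReal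
    fun_prop
  have haa : a ^ 2 = σ ^ 2 * (2 * Real.log (2 * m)) := by
    rw [ha_def, mul_pow, hsq]
  have hca : c * a = Real.log (2 * m) := by
    rw [hc_def]; field_simp; nlinarith [haa]
  have part2 : (∫⁻ t in Ioi a, P {ω | t < f ω}) ≤ ENNReal.ofReal (2 * σ ^ 2 / a) := by
    calc (∫⁻ t in Ioi a, P {ω | t < f ω})
        ≤ ∫⁻ t in Ioi a, ENNReal.ofReal (2 * m * Real.exp (-(c * t))) :=
          setLIntegral_mono hmblExp (fun t ht => tail_bound t ht)
      _ = ENNReal.ofReal (∫ t in Ioi a, 2 * m * Real.exp (-(c * t))) :=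
          (ofReal_integral_eq_lintegral_ofReal hIntExp
            (Filter.Eventually.of_forall (fun t => by positivity))).symm
      _ = ENNReal.ofReal (2 * σ ^ 2 / a) := by
          congr 1
          rw [MeasureTheory.integral_const_mul, integral_exp_neg_mul_Ioi hc,
            hca, Real.exp_neg, Real.exp_log (by linarith : (0:ℝ) < 2 * m), hc_def]
          field_simp
  rw [key]
  have hfin : (∫⁻ t in Ioi (0:ℝ), P {ω | t < f ω})
      ≤ ENNReal.ofReal a + ENNReal.ofReal (2 * σ ^ 2 / a) := by
    rw [split]; exact add_le_add part1 part2
  have hto := ENNReal.toReal_mono (by finiteness) hfin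
  rw [ENNReal.toReal_add (by finiteness) (by finiteness), ENNReal.toReal_ofReal ha.le,
    ENNReal.toReal_ofReal (by positivity)] at hto
  refine le_trans hto ?_
  have h2 : 2 * σ ^ 2 / a ≤ 2 * σ := by
    rw [div_le_iff₀ ha]
    nlinarith
  nlinarith
section Entropy

variable {T : Type*} [MetricSpace T] [Fintype T] [Nonempty T]

lemma g_anti {ε ε' : ℝ} (hε : 0 ≤ ε) (h : ε ≤ ε') :
    Real.sqrt (Real.log (coveringNumber T ε')) ≤ Real.sqrt (Real.log (coveringNumber T ε)) := by
  apply Real.sqrt_le_sqrt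
  apply Real.log_le_log
  · exact_mod_cast one_le_coveringNumber (T := T) (hε.trans h)
  · exact_mod_cast antitone_coveringNumber hε h

lemma g_le_bound {ε : ℝ} (hε : 0 ≤ ε) :
    Real.sqrt (Real.log (coveringNumber T ε)) ≤ Real.sqrt (Real.log (Fintype.card T)) := by
  apply Real.sqrt_le_sqrt
  apply Real.log_le_log
  · exact_mod_cast one_le_coveringNumber (T := T) hε
  · exact_mod_cast coveringNumber_le_card hε

lemma g_eq_zero {D ε : ℝ} (t₁ : T) (hDmax : ∀ t : T, dist t t₁ ≤ D) (hε : D ≤ ε) :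
    Real.sqrt (Real.log (coveringNumber T ε)) = 0 := by
  rw [coveringNumber_eq_one t₁ (fun t => (hDmax t).trans hε)]
  simp

lemma measurable_gaux :
    Measurable (fun ε : ℝ => Real.sqrt (Real.log (coveringNumber T (max ε 0)))) := by
  apply Antitone.measurable
  intro x y hxy
  exact g_anti (le_max_right x 0) (max_le_max hxy le_rfl)

lemma integrableOn_g {D : ℝ} (hD : 0 < D) (t₁ : T) (hDmax : ∀ t : T, dist t t₁ ≤ D) :
    MeasureTheory.IntegrableOn (fun ε : ℝ => Real.sqrt (Real.log (coveringNumber T ε)))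
      (Set.Ioi 0) := by
  have hEq : Set.EqOn (fun ε : ℝ => Real.sqrt (Real.log (coveringNumber T (max ε 0))))
      (fun ε : ℝ => Real.sqrt (Real.log (coveringNumber T ε))) (Set.Ioi 0) := by
    intro x hx
    simp only
    rw [max_eq_left (le_of_lt hx)]
  have h1 : MeasureTheory.IntegrableOn
      (fun ε : ℝ => Real.sqrt (Real.log (coveringNumber T (max ε 0)))) (Set.Ioc 0 D) := by
    apply MeasureTheory.Measure.integrableOn_of_bounded
      (M := Real.sqrt (Real.log (Fintype.card T)))
    · rw [Real.volume_Ioc]; exact ENNReal.ofReal_ne_top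
    · exact measurable_gaux.aestronglyMeasurable
    · apply MeasureTheory.ae_of_all
      intro x
      rw [Real.norm_eq_abs, abs_of_nonneg (Real.sqrt_nonneg _)]
      exact g_le_bound (le_max_right x 0)
  have h2 : MeasureTheory.IntegrableOn
      (fun ε : ℝ => Real.sqrt (Real.log (coveringNumber T (max ε 0)))) (Set.Ioi D) := by
    apply MeasureTheory.IntegrableOn.congr_fun (MeasureTheory.integrableOn_zero)
      ?_ measurableSet_Ioi
    intro x hx
    simp only [Set.mem_Ioi] at hx
    symm
    simp only
    rw [max_eq_left (le_of_lt (lt_trans hD hx))]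
    exact g_eq_zero t₁ hDmax hx.le
  have h3 := MeasureTheory.IntegrableOn.union h1 h2
  rw [Set.Ioc_union_Ioi_eq_Ioi hD.le] at h3
  exact h3.congr_fun hEq measurableSet_Ioi

lemma entropy_lower {t₁ t₂ : T} (hD : 0 < dist t₁ t₂) (hDmax : ∀ s t : T, dist s t ≤ dist t₁ t₂) :
    Real.sqrt (Real.log 2) * (dist t₁ t₂ / 2)
      ≤ ∫ ε in Set.Ioi (0:ℝ), Real.sqrt (Real.log (coveringNumber T ε)) := by
  set D := dist t₁ t₂ with hDdef
  have hint : MeasureTheory.IntegrableOn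
      (fun ε : ℝ => Real.sqrt (Real.log (coveringNumber T ε))) (Set.Ioi 0) :=
    integrableOn_g hD t₁ (fun t => hDmax t t₁)
  have step1 : Real.sqrt (Real.log 2) * (D / 2)
      ≤ ∫ ε in Set.Ioo (0:ℝ) (D/2), Real.sqrt (Real.log (coveringNumber T ε)) := by
    have hconst : ∫ ε in Set.Ioo (0:ℝ) (D/2), Real.sqrt (Real.log 2)
        = Real.sqrt (Real.log 2) * (D / 2) := by
      rw [MeasureTheory.setIntegral_const, Real.volume_real_Ioo_of_le (by linarith), smul_eq_mul,
        sub_zero]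
      ring
    rw [← hconst]
    apply MeasureTheory.setIntegral_mono_on
    · exact MeasureTheory.integrableOn_const (by rw [Real.volume_Ioo]; exact ENNReal.ofReal_ne_top)
    · exact hint.mono_set (fun x hx => hx.1)
    · exact measurableSet_Ioo
    · intro x hx
      obtain ⟨hx1, hx2⟩ := hx
      have h2 : 2 ≤ coveringNumber T x :=
        two_le_coveringNumber hx1.le (t₁ := t₁) (t₂ := t₂) (by linarith)
      apply Real.sqrt_le_sqrt
      apply Real.log_le_log (by norm_num)
      exact_mod_cast h2
  refine le_trans step1 ?_
  apply MeasureTheory.setIntegral_mono_set hint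
  · exact MeasureTheory.ae_of_all _ (fun x => Real.sqrt_nonneg _)
  · exact MeasureTheory.ae_of_all _ (fun x hx => hx.1)

end Entropy
section Dyadic

variable {T : Type*} [MetricSpace T] [Fintype T] [Nonempty T]

lemma dyadic_sum_le {D : ℝ} (hD : 0 < D) (t₁ : T) (hDmax : ∀ t : T, dist t t₁ ≤ D) (K : ℕ) :
    ∑ k ∈ Finset.Icc 1 K, (D / 2 ^ k) * Real.sqrt (Real.log (coveringNumber T (D / 2 ^ k)))
      ≤ 2 * ∫ ε in Set.Ioi (0:ℝ), Real.sqrt (Real.log (coveringNumber T ε)) := by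
  set g : ℝ → ℝ := fun ε => Real.sqrt (Real.log (coveringNumber T ε)) with hg_def
  set e : ℕ → ℝ := fun k => D / 2 ^ k with he_def
  have he_pos : ∀ k, 0 < e k := fun k => by positivity
  have he_anti : ∀ i j : ℕ, i ≤ j → e j ≤ e i := by
    intro i j hij
    apply div_le_div_of_nonneg_left hD.le (by positivity)
    exact pow_le_pow_right₀ (by norm_num) hij
  have he_half : ∀ k, e (k + 1) = e k / 2 := by
    intro k; rw [he_def]; simp only; rw [pow_succ]; ring
  have hint : MeasureTheory.IntegrableOn g (Set.Ioi 0) :=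
    integrableOn_g hD t₁ hDmax
  -- interval estimate for each k
  have hIoc_sub : ∀ k : ℕ, Set.Ioc (e (k+1)) (e k) ⊆ Set.Ioi (0:ℝ) :=
    fun k x hx => lt_trans (he_pos (k+1)) hx.1
  have step : ∀ k : ℕ, e k * g (e k) ≤ 2 * ∫ ε in Set.Ioc (e (k+1)) (e k), g ε := by
    intro k
    have hconst : ∫ ε in Set.Ioc (e (k+1)) (e k), g (e k)
        = (e k - e (k+1)) * g (e k) := by
      rw [MeasureTheory.setIntegral_const,
        Real.volume_real_Ioc_of_le (by linarith [he_anti k (k+1) (Nat.le_succ k)]), smul_eq_mul]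
    have hmono : ∫ ε in Set.Ioc (e (k+1)) (e k), g (e k)
        ≤ ∫ ε in Set.Ioc (e (k+1)) (e k), g ε := by
      apply MeasureTheory.setIntegral_mono_on
      · exact MeasureTheory.integrableOn_const
          (by rw [Real.volume_Ioc]; exact ENNReal.ofReal_ne_top)
      · exact hint.mono_set (hIoc_sub k)
      · exact measurableSet_Ioc
      · intro x hx
        exact g_anti (lt_trans (he_pos (k+1)) hx.1).le hx.2
    have : e k - e (k+1) = e k / 2 := by rw [he_half]; ring
    nlinarith [hconst, hmono, Real.sqrt_nonneg (Real.log (coveringNumber T (e k))), he_pos k]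
  calc ∑ k ∈ Finset.Icc 1 K, e k * g (e k)
      ≤ ∑ k ∈ Finset.Icc 1 K, 2 * ∫ ε in Set.Ioc (e (k+1)) (e k), g ε :=
        Finset.sum_le_sum (fun k _ => step k)
    _ = 2 * ∑ k ∈ Finset.Icc 1 K, ∫ ε in Set.Ioc (e (k+1)) (e k), g ε := by
        rw [Finset.mul_sum]
    _ ≤ 2 * ∫ ε in Set.Ioi (0:ℝ), g ε := by
        gcongr 2 * ?_
        have hdisj : Set.Pairwise (↑(Finset.Icc 1 K))
            (Function.onFun Disjoint fun k : ℕ => Set.Ioc (e (k+1)) (e k)) := by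
          intro i _ j _ hij
          rcases lt_or_gt_of_ne hij with h | h
          · apply Set.Ioc_disjoint_Ioc.mpr
            calc min (e i) (e j) ≤ e j := min_le_right _ _
              _ ≤ e (i+1) := he_anti (i+1) j h
              _ ≤ max (e (i+1)) (e (j+1)) := le_max_left _ _
          · apply Set.Ioc_disjoint_Ioc.mpr
            calc min (e i) (e j) ≤ e i := min_le_left _ _
              _ ≤ e (j+1) := he_anti (j+1) i h
              _ ≤ max (e (i+1)) (e (j+1)) := le_max_right _ _
        rw [← MeasureTheory.integral_biUnion_finset (Finset.Icc 1 K)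
          (fun i _ => measurableSet_Ioc) hdisj
          (fun i _ => hint.mono_set (hIoc_sub i))]
        apply MeasureTheory.setIntegral_mono_set hint
        · exact MeasureTheory.ae_of_all _ (fun x => Real.sqrt_nonneg _)
        · apply MeasureTheory.ae_of_all
          intro x hx
          obtain ⟨i, _, hxi⟩ := Set.mem_iUnion₂.mp hx
          exact hIoc_sub i hxi

end Dyadic
end Aux

set_option maxHeartbeats 1600000 in
/-- Dudley's entropy bound: there is a universal constant `L̄` such that for every finite
metric index set `T` and every centered process `(X_t)` which is sub-Gaussian with respect
to the metric, `E[sup_t X_t] ≤ L̄ ∫_0^∞ √(log N(T,d,ε)) dε`. -/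
theorem stmt11 :
    ∃ L : ℝ, 0 < L ∧
      ∀ (T : Type) [Fintype T] [MetricSpace T] [Nonempty T]
        (Ω : Type) [MeasurableSpace Ω] (P : Measure Ω) [IsProbabilityMeasure P]
        (X : T → Ω → ℝ),
        (∀ t, Integrable (X t) P) →
        (∀ t, (∫ ω, X t ω ∂P) = 0) →
        (∀ s t : T, ∀ lam : ℝ, 0 < lam →
          P {ω | lam ≤ |X t ω - X s ω|} ≤
            ENNReal.ofReal (2 * Real.exp (-lam ^ 2 / (2 * (dist s t) ^ 2)))) →
        (∫ ω, (⨆ t, X t ω) ∂P) ≤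
          L * ∫ ε in Set.Ioi (0 : ℝ), Real.sqrt (Real.log (coveringNumber T ε)) := by
  refine ⟨100, by norm_num, ?_⟩
  intro T _ _ _ Ω _ P _ X hint hmean htail
  classical
  set g : ℝ → ℝ := fun ε => Real.sqrt (Real.log (coveringNumber T ε)) with hg_def
  set I : ℝ := ∫ ε in Set.Ioi (0:ℝ), g ε with hI_def
  have hI_nn : 0 ≤ I :=
    setIntegral_nonneg measurableSet_Ioi (fun x _ => Real.sqrt_nonneg _)
  by_cases hcard : Fintype.card T ≤ 1
  · -- trivial case: single point
    haveI : Subsingleton T := Fintype.card_le_one_iff_subsingleton.mp hcard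
    haveI : Unique T := uniqueOfSubsingleton (Classical.arbitrary T)
    have : ∀ ω, (⨆ t, X t ω) = X default ω := fun ω => ciSup_unique
    calc ∫ ω, (⨆ t, X t ω) ∂P = ∫ ω, X default ω ∂P := by simp_rw [this]
      _ = 0 := hmean default
      _ ≤ 100 * I := by positivity
  · push_neg at hcard
    -- diameter pair
    obtain ⟨⟨t₁, t₂⟩, -, hDeq⟩ :=
      Finset.exists_mem_eq_sup' (s := (Finset.univ ×ˢ Finset.univ : Finset (T × T)))
        ⟨(Classical.arbitrary T, Classical.arbitrary T), by simp⟩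
        (fun p : T × T => dist p.1 p.2)
    set D : ℝ := dist t₁ t₂ with hD_def
    have hDmax : ∀ s t : T, dist s t ≤ D := by
      intro s t
      rw [← hDeq]
      exact Finset.le_sup' (f := fun p : T × T => dist p.1 p.2) (by simp : (s, t) ∈ _)
    have hD : 0 < D := by
      obtain ⟨a, b, hab⟩ := Fintype.exists_pair_of_one_lt_card hcard
      exact lt_of_lt_of_le (dist_pos.mpr hab) (hDmax a b)
    -- minimal positive distance
    set Pairs : Finset (T × T) := Finset.univ.filter (fun p : T × T => p.1 ≠ p.2) with hPairs
    have hPne : Pairs.Nonempty := by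
      obtain ⟨a, b, hab⟩ := Fintype.exists_pair_of_one_lt_card hcard
      exact ⟨(a, b), by simp [hPairs, hab]⟩
    set δ : ℝ := Pairs.inf' hPne (fun p => dist p.1 p.2) with hδ_def
    have hδ_pos : 0 < δ := by
      rw [hδ_def]
      refine (Finset.lt_inf'_iff hPne).mpr ?_
      intro p hp
      simp only [hPairs, Finset.mem_filter, Finset.mem_univ, true_and] at hp
      exact dist_pos.mpr hp
    have hδ_le : ∀ s t : T, s ≠ t → δ ≤ dist s t := by
      intro s t hst
      exact Finset.inf'_le (fun p => dist p.1 p.2)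
        (show (s, t) ∈ Pairs by rw [hPairs]; simp [hst])
    have hne12 : t₁ ≠ t₂ := by
      intro h
      rw [hD_def, h] at hD
      simp at hD
    have hδD : δ ≤ D := by
      rw [hD_def]
      exact hδ_le t₁ t₂ hne12
    -- choose K
    obtain ⟨K, hK⟩ := pow_unbounded_of_one_lt (D / δ) (by norm_num : (1:ℝ) < 2)
    have hKe : D / 2 ^ K < δ := by
      rw [div_lt_iff₀ (by positivity)] at hK ⊢
      · nlinarith [pow_pos (by norm_num : (0:ℝ) < 2) K]
    have hK1 : 1 ≤ K := by
      by_contra h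
      push_neg at h
      have h0 : K = 0 := by omega
      subst h0
      norm_num at hKe
      linarith
    -- dyadic scales
    set e : ℕ → ℝ := fun k => D / 2 ^ k with he_def
    have he_pos : ∀ k, 0 < e k := fun k => by positivity
    have he_half : ∀ k, e (k + 1) = e k / 2 := by
      intro k; rw [he_def]; simp only; rw [pow_succ]; ring
    -- nets
    have hcov : ∀ k : ℕ, ∃ S : Finset T, S.card ≤ coveringNumber T (e k) ∧
        ∀ t : T, ∃ s ∈ S, dist t s ≤ e k := fun k => exists_min_cover (he_pos k).le
    choose Snet hScard hScov using hcov
    choose near hnmem hndist using hScov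
    -- identity at level K
    have hnid : ∀ t, near K t = t := by
      intro t
      by_contra hne
      have h1 := hndist K t
      have h2 := hδ_le t (near K t) (fun h => hne h.symm)
      rw [he_def] at h1
      linarith
    -- modified level-0 net
    set prg : ℕ → T → T := fun k t => if k = 0 then t₁ else near k t with hprg_def
    set Sg : ℕ → Finset T := fun k => if k = 0 then {t₁} else Snet k with hSg_def
    have hgmem : ∀ k t, prg k t ∈ Sg k := by
      intro k t
      rw [hprg_def, hSg_def]
      by_cases hk : k = 0 <;> simp [hk, hnmem]
    have hgdist : ∀ k t, dist t (prg k t) ≤ e k := by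
      intro k t
      rw [hprg_def]
      by_cases hk : k = 0
      · simp only [hk, if_pos rfl]
        rw [he_def]; simpa using hDmax t t₁
      · simp only [if_neg hk]; exact hndist k t
    have hgcard : ∀ k, (Sg k).card ≤ coveringNumber T (e k) := by
      intro k
      rw [hSg_def]
      by_cases hk : k = 0
      · simp only [hk, if_pos rfl, Finset.card_singleton]
        exact one_le_coveringNumber (he_pos 0).le
      · simp only [if_neg hk]; exact hScard k
    have hgid : ∀ t, prg K t = t := by
      intro t
      rw [hprg_def]
      simp only [if_neg (by omega : K ≠ 0)]
      exact hnid t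
    -- link sets
    set J : ℕ → Finset (T × T) := fun k =>
      (Sg (k+1) ×ˢ Sg k).filter (fun p => dist p.1 p.2 ≤ 3 * e (k+1)) with hJ_def
    have hJmem : ∀ k t, (prg (k+1) t, prg k t) ∈ J k := by
      intro k t
      rw [hJ_def]
      refine Finset.mem_filter.mpr ⟨Finset.mem_product.mpr ⟨hgmem _ t, hgmem _ t⟩, ?_⟩
      have h1 := hgdist (k+1) t
      have h2 := hgdist k t
      have h3 : dist (prg (k+1) t) (prg k t) ≤ dist (prg (k+1) t) t + dist t (prg k t) :=
        dist_triangle _ _ _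
      rw [dist_comm (prg (k+1) t) t] at h3
      have h4 : e k = 2 * e (k+1) := by rw [he_half]; ring
      simp only
      linarith
    have hJne : ∀ k, (J k).Nonempty := fun k => ⟨_, hJmem k (Classical.arbitrary T)⟩
    have hJcard : ∀ k, (J k).card ≤ (coveringNumber T (e (k+1)))^2 := by
      intro k
      calc (J k).card ≤ ((Sg (k+1)) ×ˢ (Sg k)).card := Finset.card_filter_le _ _
        _ = (Sg (k+1)).card * (Sg k).card := Finset.card_product _ _
        _ ≤ coveringNumber T (e (k+1)) * coveringNumber T (e k) :=
            Nat.mul_le_mul (hgcard (k+1)) (hgcard k)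
        _ ≤ coveringNumber T (e (k+1)) * coveringNumber T (e (k+1)) := by
            apply Nat.mul_le_mul_left
            apply antitone_coveringNumber (he_pos (k+1)).le
            rw [he_half]
            linarith [he_pos (k+1), he_pos k, he_half k]
        _ = (coveringNumber T (e (k+1)))^2 := (sq _).symm
    -- level maxima
    set M : ℕ → Ω → ℝ := fun k ω => (J k).sup' (hJne k) (fun p => |X p.1 ω - X p.2 ω|)
      with hM_def
    have hM_int : ∀ k, Integrable (M k) P := by
      intro k
      exact integrable_finset_sup' _ (hJne k) _
        (fun p _ => ((hint p.1).sub (hint p.2)).abs)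
    -- chaining pointwise bound
    have hchain : ∀ ω t, X t ω ≤ X t₁ ω + ∑ k ∈ Finset.range K, M k ω := by
      intro ω t
      have htel : ∑ k ∈ Finset.range K, (X (prg (k+1) t) ω - X (prg k t) ω)
          = X (prg K t) ω - X (prg 0 t) ω :=
        Finset.sum_range_sub (fun k => X (prg k t) ω) K
      have h0 : prg 0 t = t₁ := by simp [hprg_def]
      rw [hgid t, h0] at htel
      have hterm : ∀ k ∈ Finset.range K,
          X (prg (k+1) t) ω - X (prg k t) ω ≤ M k ω := by
        intro k _
        refine le_trans (le_abs_self _) ?_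
        exact Finset.le_sup' (f := fun p : T × T => |X p.1 ω - X p.2 ω|) (hJmem k t)
      have := Finset.sum_le_sum hterm
      rw [htel] at this
      linarith
    -- expected value of the sup
    have hsup_eq : ∀ ω, (⨆ t, X t ω) = Finset.univ.sup' Finset.univ_nonempty
        (fun t => X t ω) := fun ω => (Finset.sup'_univ_eq_ciSup _).symm
    have hsup_le : ∀ ω, (⨆ t, X t ω) ≤ X t₁ ω + ∑ k ∈ Finset.range K, M k ω := by
      intro ω
      rw [hsup_eq ω]
      exact Finset.sup'_le _ _ (fun t _ => hchain ω t)
    have hsup_int : Integrable (fun ω => ⨆ t, X t ω) P := by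
      have := integrable_finset_sup' Finset.univ Finset.univ_nonempty
        (fun t ω => X t ω) (fun t _ => hint t)
      exact this.congr (Filter.Eventually.of_forall (fun ω => (hsup_eq ω).symm))
    have hrhs_int : Integrable (fun ω => X t₁ ω + ∑ k ∈ Finset.range K, M k ω) P :=
      (hint t₁).add (integrable_finset_sum _ (fun k _ => hM_int k))
    have hEsup : ∫ ω, (⨆ t, X t ω) ∂P ≤ ∑ k ∈ Finset.range K, ∫ ω, M k ω ∂P := by
      calc ∫ ω, (⨆ t, X t ω) ∂P
          ≤ ∫ ω, (X t₁ ω + ∑ k ∈ Finset.range K, M k ω) ∂P :=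
            integral_mono hsup_int hrhs_int hsup_le
        _ = (∫ ω, X t₁ ω ∂P) + ∫ ω, (∑ k ∈ Finset.range K, M k ω) ∂P :=
            integral_add (hint t₁) (integrable_finset_sum _ (fun k _ => hM_int k))
        _ = ∑ k ∈ Finset.range K, ∫ ω, M k ω ∂P := by
            rw [hmean t₁, integral_finset_sum _ (fun k _ => hM_int k), zero_add]
    -- per-level bound via expect_max_le
    have hlevel : ∀ k, ∫ ω, M k ω ∂P
        ≤ 3 * e (k+1) * (Real.sqrt (2 * Real.log (2 * (J k).card)) + 4) := by
      intro k
      apply expect_max_le P (J k) (hJne k) (fun p ω => X p.1 ω - X p.2 ω)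
        (fun p _ => (hint p.1).sub (hint p.2)) (by positivity)
      intro p hp lam hlam
      by_cases hpp : p.1 = p.2
      · have : {ω | lam ≤ |X p.1 ω - X p.2 ω|} = ∅ := by
          ext ω
          simp [hpp, abs_nonneg, not_le, hlam]
        rw [this]
        simp
      · have hd : 0 < dist p.1 p.2 := dist_pos.mpr hpp
        have hdle : dist p.1 p.2 ≤ 3 * e (k+1) := by
          rw [hJ_def] at hp
          exact (Finset.mem_filter.mp hp).2
        refine le_trans (by
          have := htail p.2 p.1 lam hlam
          rwa [dist_comm p.2 p.1] at this) (ENNReal.ofReal_le_ofReal ?_)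
        have hmono : -lam ^ 2 / (2 * dist p.1 p.2 ^ 2) ≤ -lam ^ 2 / (2 * (3 * e (k+1)) ^ 2) := by
          rw [neg_div, neg_div, neg_le_neg_iff]
          apply div_le_div_of_nonneg_left (by positivity) (by positivity)
          nlinarith [he_pos (k+1)]
        nlinarith [Real.exp_le_exp.mpr hmono, Real.exp_pos (-lam ^ 2 / (2 * (3 * e (k+1)) ^ 2))]
    -- bound the sqrt-log term
    have hsqrtbd : ∀ k, Real.sqrt (2 * Real.log (2 * (J k).card))
        ≤ 2 + 2 * Real.sqrt (Real.log (coveringNumber T (e (k+1)))) := by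
      intro k
      set N : ℕ := coveringNumber T (e (k+1)) with hN_def
      have hN1 : 1 ≤ N := one_le_coveringNumber (he_pos (k+1)).le
      have hJ1 : 1 ≤ (J k).card := Finset.card_pos.mpr (hJne k)
      have hlogN : 0 ≤ Real.log N := Real.log_nonneg (by exact_mod_cast hN1)
      have step1 : Real.log (2 * ((J k).card : ℝ)) ≤ Real.log 2 + 2 * Real.log N := by
        calc Real.log (2 * ((J k).card : ℝ)) ≤ Real.log (2 * ((N:ℝ)^2)) := by
              apply Real.log_le_log (by positivity)
              have : ((J k).card : ℝ) ≤ ((N:ℝ))^2 := by exact_mod_cast hJcard k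
              nlinarith
          _ = Real.log 2 + 2 * Real.log N := by
              rw [Real.log_mul (by norm_num) (by positivity), Real.log_pow]
              push_cast; ring
      calc Real.sqrt (2 * Real.log (2 * (J k).card))
          ≤ Real.sqrt (2 * Real.log 2 + 4 * Real.log N) := by
            apply Real.sqrt_le_sqrt; linarith
        _ ≤ Real.sqrt (2 * Real.log 2) + Real.sqrt (4 * Real.log N) := by
            apply sqrt_add_le_add_sqrt (by positivity) (by positivity)
        _ ≤ 2 + 2 * Real.sqrt (Real.log N) := by
            have h1 : Real.sqrt (2 * Real.log 2) ≤ 2 := by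
              have hle : (2:ℝ) * Real.log 2 ≤ 4 := by nlinarith [Real.log_two_lt_d9]
              calc Real.sqrt (2 * Real.log 2) ≤ Real.sqrt 4 := Real.sqrt_le_sqrt hle
                _ = 2 := by
                    rw [show (4:ℝ) = 2^2 by norm_num, Real.sqrt_sq (by norm_num : (0:ℝ) ≤ 2)]
            have h2 : Real.sqrt (4 * Real.log N) = 2 * Real.sqrt (Real.log N) := by
              rw [show (4:ℝ) * Real.log N = 2^2 * Real.log N by ring,
                Real.sqrt_mul (by positivity), Real.sqrt_sq (by norm_num)]
            linarith
    -- assemble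
    have hsum1 : ∑ k ∈ Finset.range K, e (k+1) ≤ D := by
      have : ∀ k, e (k+1) = (D/2) * (1/2)^k := by
        intro k
        show D / 2 ^ (k+1) = (D/2) * (1/2)^k
        rw [one_div, inv_pow, ← div_eq_mul_inv, div_div]
        congr 1
        rw [pow_succ]
        ring
      simp_rw [this]
      rw [← Finset.mul_sum]
      have hgeo : ∑ k ∈ Finset.range K, ((1:ℝ)/2)^k ≤ 2 := sum_geometric_two_le K
      nlinarith
    have hsum2 : ∑ k ∈ Finset.range K, e (k+1) * Real.sqrt (Real.log (coveringNumber T (e (k+1))))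
        ≤ 2 * I := by
      have hre : ∑ k ∈ Finset.range K, e (k+1) * Real.sqrt (Real.log (coveringNumber T (e (k+1))))
          = ∑ j ∈ Finset.Icc 1 K, e j * Real.sqrt (Real.log (coveringNumber T (e j))) := by
        rw [← Finset.Ico_add_one_right_eq_Icc, Finset.sum_Ico_eq_sum_range]
        simp only [Nat.add_sub_cancel]
        apply Finset.sum_congr rfl
        intro k _
        rw [add_comm 1 k]
      rw [hre, hI_def, hg_def]
      exact dyadic_sum_le hD t₁ (fun t => hDmax t t₁) K
    have hDI : D ≤ (5/2) * I := by
      have hlow := entropy_lower (T := T) (t₁ := t₁) (t₂ := t₂) hD hDmax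
      rw [← hD_def] at hlow
      have h08 : (4/5 : ℝ) ≤ Real.sqrt (Real.log 2) := by
        rw [show (4/5:ℝ) = Real.sqrt ((4/5)^2) by rw [Real.sqrt_sq (by norm_num)]]
        apply Real.sqrt_le_sqrt
        nlinarith [Real.log_two_gt_d9]
      nlinarith [Real.sqrt_nonneg (Real.log 2)]
    calc ∫ ω, (⨆ t, X t ω) ∂P ≤ ∑ k ∈ Finset.range K, ∫ ω, M k ω ∂P := hEsup
      _ ≤ ∑ k ∈ Finset.range K,
            3 * e (k+1) * (Real.sqrt (2 * Real.log (2 * (J k).card)) + 4) :=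
          Finset.sum_le_sum (fun k _ => hlevel k)
      _ ≤ ∑ k ∈ Finset.range K,
            (18 * e (k+1) + 6 * (e (k+1) * Real.sqrt (Real.log (coveringNumber T (e (k+1)))))) := by
          apply Finset.sum_le_sum
          intro k _
          have := hsqrtbd k
          nlinarith [he_pos (k+1), Real.sqrt_nonneg (2 * Real.log (2 * (J k).card))]
      _ = 18 * (∑ k ∈ Finset.range K, e (k+1))
            + 6 * ∑ k ∈ Finset.range K,
                e (k+1) * Real.sqrt (Real.log (coveringNumber T (e (k+1)))) := by
          rw [Finset.sum_add_distrib, ← Finset.mul_sum, ← Finset.mul_sum]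
      _ ≤ 18 * D + 6 * (2 * I) := by
          have := hsum2
          nlinarith [hsum1]
      _ ≤ 100 * I := by nlinarith [hDI, hI_nn]
end
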